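/- arXiv:0906.4255 — 5 statements merged into one kernel-verified Lean document; each statement's English description precedes it below -/
import Mathlib

section
/- Let (E_t, β_{s,t}) and (F_t, γ_{s,t}) be subproduct systems of two-dimensional Hilbert spaces, let (x_t,y_t)_t be a basis of (E_t,β) and (u_t,v_t)_t a basis of (F_t,γ). If there exists an isomorphism between (E_t,β) and (F_t,γ), then the two bases are of the same type with the same parameter: i.e., if one is of type E_1(a) and the other of type E_1(b) then a=b; if one is of type E_2(a) and the other of type E_2(b) then a=b; if one is of type E_3(λ) and the other of type E_3(μ) then λ=μ; and it is impossible for the two bases to be of two distinct types among E_1, E_2, E_3, E_4, E_5. -/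
noncomputable section

open scoped TensorProduct ComplexConjugate

namespace SubprodHilbert

section TensorConstruction


variable {E F : Type*} [NormedAddCommGroup E] [InnerProductSpace ℂ E]
  [NormedAddCommGroup F] [InnerProductSpace ℂ F]

local notation "⟪" x ", " y "⟫" => @inner ℂ _ _ x y

/-- For fixed `u, v`, the ℂ-bilinear functional `(u', v') ↦ ⟪u,u'⟫ ⟪v,v'⟫`. -/
def innerAux (u : E) (v : F) : E →ₗ[ℂ] F →ₗ[ℂ] ℂ :=
  LinearMap.mk₂ ℂ (fun u' v' => ⟪u, u'⟫ * ⟪v, v'⟫)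
    (fun m₁ m₂ n => by simp [inner_add_right]; ring)
    (fun c m n => by simp [inner_smul_right]; ring)
    (fun m n₁ n₂ => by simp [inner_add_right]; ring)
    (fun c m n => by simp [inner_smul_right]; ring)

@[simp] lemma innerAux_apply (u u' : E) (v v' : F) :
    innerAux u v u' v' = ⟪u, u'⟫ * ⟪v, v'⟫ := rfl

/-- The (conjugate-linear-in-the-first-variable) map sending `z : E ⊗ F` to the linear
functional `w ↦ ⟪z, w⟫`. -/
def innerFunc : E ⊗[ℂ] F →+ (E ⊗[ℂ] F →ₗ[ℂ] ℂ) :=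
  TensorProduct.liftAddHom
    (AddMonoidHom.mk'
      (fun u => AddMonoidHom.mk' (fun v => TensorProduct.lift (innerAux u v))
        (fun v₁ v₂ => by
          apply TensorProduct.ext'
          intro u' v'
          simp [inner_add_left]
          ring))
      (fun u₁ u₂ => by
        ext v : 1
        apply TensorProduct.ext'
        intro u' v'
        simp [inner_add_left]
        ring))
    (fun c u v => by
      apply TensorProduct.ext'
      intro u' v'
      simp [inner_smul_left]
      ring)

@[simp] lemma innerFunc_tmul (u u' : E) (v v' : F) :
    innerFunc (u ⊗ₜ[ℂ] v) (u' ⊗ₜ[ℂ] v') = ⟪u, u'⟫ * ⟪v, v'⟫ := rfl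

lemma innerFunc_smul (c : ℂ) (z : E ⊗[ℂ] F) :
    innerFunc (c • z) = conj c • innerFunc z := by
  induction z using TensorProduct.induction_on with
  | zero => simp
  | tmul u v =>
      rw [TensorProduct.smul_tmul']
      apply TensorProduct.ext'
      intro u' v'
      simp [inner_smul_left]
      ring
  | add z₁ z₂ h₁ h₂ => rw [smul_add, map_add, map_add, h₁, h₂, smul_add]

lemma innerFunc_conj_symm (z w : E ⊗[ℂ] F) :
    conj (innerFunc w z) = innerFunc z w := by
  induction z using TensorProduct.induction_on with
  | zero => simp
  | tmul u v =>
      induction w using TensorProduct.induction_on with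
      | zero => simp
      | tmul u' v' =>
          simp only [innerFunc_tmul, map_mul, inner_conj_symm]
      | add w₁ w₂ h₁ h₂ => simp [map_add, h₁, h₂]
  | add z₁ z₂ h₁ h₂ => simp [map_add, h₁, h₂]

lemma exists_orthonormal_rep (z : E ⊗[ℂ] F) :
    ∃ (n : ℕ) (e : Fin n → E) (w : Fin n → F),
      Orthonormal ℂ e ∧ z = ∑ i, e i ⊗ₜ[ℂ] w i := by
  obtain ⟨S, rfl⟩ := TensorProduct.exists_finset z
  set U : Submodule ℂ E := Submodule.span ℂ (Prod.fst '' (S : Set (E × F))) with hU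
  haveI : FiniteDimensional ℂ U :=
    FiniteDimensional.span_of_finite ℂ (S.finite_toSet.image _)
  let b : OrthonormalBasis (Fin (Module.finrank ℂ U)) ℂ U := stdOrthonormalBasis ℂ U
  have hone : Orthonormal ℂ (fun i => (b i : E)) := by
    have hb := b.orthonormal
    constructor
    · intro i; simpa [norm] using hb.1 i
    · intro i j hij; simpa [Submodule.coe_inner] using hb.2 hij
  refine ⟨_, fun i => (b i : E), fun i => ∑ p ∈ S, ⟪(b i : E), p.1⟫ • p.2, hone, ?_⟩
  have key : ∀ p ∈ S, p.1 ⊗ₜ[ℂ] p.2 = ∑ i, ⟪(b i : E), p.1⟫ • ((b i : E) ⊗ₜ[ℂ] p.2) := by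
    intro p hp
    have hmem : p.1 ∈ U := Submodule.subset_span ⟨p, hp, rfl⟩
    have hrep : ((∑ i, (⟪b i, (⟨p.1, hmem⟩ : U)⟫ : ℂ) • b i : U) : E) = p.1 := by
      rw [b.sum_repr' ⟨p.1, hmem⟩]
    have h2 : ∀ i, (⟪b i, (⟨p.1, hmem⟩ : U)⟫ : ℂ) = ⟪(b i : E), p.1⟫ := fun i =>
      Submodule.coe_inner U (b i) ⟨p.1, hmem⟩
    have hrep' : p.1 = ∑ i, ⟪(b i : E), p.1⟫ • (b i : E) := by
      calc p.1 = ((∑ i, (⟪b i, (⟨p.1, hmem⟩ : U)⟫ : ℂ) • b i : U) : E) := hrep.symm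
        _ = ∑ i, (⟪b i, (⟨p.1, hmem⟩ : U)⟫ : ℂ) • (b i : E) := by push_cast; rfl
        _ = ∑ i, ⟪(b i : E), p.1⟫ • (b i : E) := Finset.sum_congr rfl fun i _ => by rw [h2]
    calc p.1 ⊗ₜ[ℂ] p.2 = (∑ i, ⟪(b i : E), p.1⟫ • (b i : E)) ⊗ₜ[ℂ] p.2 := by rw [← hrep']
      _ = ∑ i, ⟪(b i : E), p.1⟫ • ((b i : E) ⊗ₜ[ℂ] p.2) := by
          rw [TensorProduct.sum_tmul]
          refine Finset.sum_congr rfl fun i _ => ?_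
          rw [TensorProduct.smul_tmul']
  calc ∑ p ∈ S, p.1 ⊗ₜ[ℂ] p.2
      = ∑ p ∈ S, ∑ i, ⟪(b i : E), p.1⟫ • ((b i : E) ⊗ₜ[ℂ] p.2) :=
        Finset.sum_congr rfl key
    _ = ∑ i, ∑ p ∈ S, ⟪(b i : E), p.1⟫ • ((b i : E) ⊗ₜ[ℂ] p.2) := Finset.sum_comm
    _ = ∑ i, (b i : E) ⊗ₜ[ℂ] (∑ p ∈ S, ⟪(b i : E), p.1⟫ • p.2) := by
        refine Finset.sum_congr rfl fun i _ => ?_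
        rw [TensorProduct.tmul_sum]
        refine Finset.sum_congr rfl fun p _ => ?_
        rw [TensorProduct.tmul_smul]

lemma innerFunc_self (n : ℕ) (e : Fin n → E) (w : Fin n → F) (he : Orthonormal ℂ e) :
    innerFunc (∑ i, e i ⊗ₜ[ℂ] w i) (∑ i, e i ⊗ₜ[ℂ] w i) = ∑ i, ⟪w i, w i⟫ := by
  have hee : ∀ i j, (⟪e i, e j⟫ : ℂ) = if i = j then 1 else 0 := orthonormal_iff_ite.mp he
  simp only [map_sum, LinearMap.coe_sum, Finset.sum_apply, innerFunc_tmul, hee, ite_mul,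
    one_mul, zero_mul]
  rw [Finset.sum_comm]
  simp

/-- The inner-product-space core on the algebraic tensor product of two complex
inner product spaces, determined by `⟪u ⊗ v, u' ⊗ v'⟫ = ⟪u,u'⟫ ⟪v,v'⟫`. -/
def tensorCore : InnerProductSpace.Core ℂ (E ⊗[ℂ] F) where
  inner z w := innerFunc z w
  conj_inner_symm := innerFunc_conj_symm
  re_inner_nonneg z := by
    show 0 ≤ RCLike.re (innerFunc z z)
    obtain ⟨n, e, w, he, rfl⟩ := exists_orthonormal_rep z
    rw [innerFunc_self n e w he]
    rw [map_sum]
    exact Finset.sum_nonneg fun i _ => inner_self_nonneg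
  add_left z₁ z₂ w := by
    show innerFunc (z₁ + z₂) w = innerFunc z₁ w + innerFunc z₂ w
    rw [map_add]; rfl
  smul_left z w c := by
    show innerFunc (c • z) w = conj c * innerFunc z w
    rw [innerFunc_smul]; rfl
  definite z hz := by
    replace hz : innerFunc z z = 0 := hz
    obtain ⟨n, e, w, he, rfl⟩ := exists_orthonormal_rep z
    rw [innerFunc_self n e w he] at hz
    have hz' : ∑ i, (‖w i‖ ^ 2 : ℝ) = 0 := by
      have := congrArg Complex.re hz
      simpa [← @inner_self_eq_norm_sq ℂ] using this
    have hw : ∀ i ∈ Finset.univ, w i = 0 := by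
      intro i hi
      have h0 : (‖w i‖ ^ 2 : ℝ) = 0 :=
        (Finset.sum_eq_zero_iff_of_nonneg fun j _ => sq_nonneg _).mp hz' i hi
      simpa using h0
    calc ∑ i, e i ⊗ₜ[ℂ] w i = ∑ i : Fin n, (0 : E ⊗[ℂ] F) :=
          Finset.sum_congr rfl fun i hi => by rw [hw i hi, TensorProduct.tmul_zero]
      _ = 0 := Finset.sum_const_zero

instance tensorNormedAddCommGroup : NormedAddCommGroup (E ⊗[ℂ] F) :=
  @InnerProductSpace.Core.toNormedAddCommGroup ℂ _ _ _ _ tensorCore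

instance tensorInnerProductSpace : InnerProductSpace ℂ (E ⊗[ℂ] F) :=
  InnerProductSpace.ofCore tensorCore.toCore

@[simp] lemma inner_tmul (u u' : E) (v v' : F) :
    (inner ℂ (u ⊗ₜ[ℂ] v) (u' ⊗ₜ[ℂ] v') : ℂ) = ⟪u, u'⟫ * ⟪v, v'⟫ := rfl
end TensorConstruction


/-- Cast between the fibers of a family of inner product spaces along an equality of
indices, as a linear isometric isomorphism. -/
def castE {ι : Type*} (E : ι → Type*) [∀ t, NormedAddCommGroup (E t)]
    [∀ t, InnerProductSpace ℂ (E t)] {a b : ι} (h : a = b) : E a ≃ₗᵢ[ℂ] E b := by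
  subst h; exact LinearIsometryEquiv.refl ℂ (E a)


section Discrete

variable (E F : ℕ+ → Type*)
  [∀ t, NormedAddCommGroup (E t)] [∀ t, InnerProductSpace ℂ (E t)]
  [∀ t, NormedAddCommGroup (F t)] [∀ t, InnerProductSpace ℂ (F t)]
variable (β : ∀ s t : ℕ+, E (s + t) →ₗᵢ[ℂ] (E s ⊗[ℂ] E t))
variable (γ : ∀ s t : ℕ+, F (s + t) →ₗᵢ[ℂ] (F s ⊗[ℂ] F t))

/-- The associativity condition in the definition of a subproduct system. -/
def SubprodAssoc : Prop :=
  ∀ r s t : ℕ+, ∀ u : E (r + s + t),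
    (TensorProduct.assoc ℂ (E r) (E s) (E t))
      (TensorProduct.map (β r s).toLinearMap LinearMap.id (β (r + s) t u))
    = TensorProduct.map LinearMap.id (β s t).toLinearMap
        (β r (s + t) (castE E (add_assoc r s t) u))

/-- `(x, y)` is a basis of type `𝓔₁(a)` of the subproduct system `(E, β)`. -/
def IsBasisE1 (a : ℝ) (x y : ∀ t : ℕ+, E t) : Prop :=
  (∀ t, ‖x t‖ = 1) ∧ (∀ t, ‖y t‖ = 1) ∧
  (∀ t : ℕ+, (inner ℂ (x t) (y t) : ℂ) = (a : ℂ) ^ (t : ℕ)) ∧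
  (∀ s t : ℕ+, β s t (x (s + t)) = x s ⊗ₜ[ℂ] x t) ∧
  (∀ s t : ℕ+, β s t (y (s + t)) = y s ⊗ₜ[ℂ] y t)

/-- `(x, y)` is a basis of type `𝓔₂(a)` of the subproduct system `(E, β)`. -/
def IsBasisE2 (a : ℝ) (x y : ∀ t : ℕ+, E t) : Prop :=
  (∀ t, ‖x t‖ = 1) ∧ (∀ t, ‖y t‖ = 1) ∧
  (∀ t : ℕ+, (inner ℂ (x t) (y t) : ℂ) = (a : ℂ) ^ (t : ℕ)) ∧
  (∀ s t : ℕ+, Even (s : ℕ) → β s t (x (s + t)) = x s ⊗ₜ[ℂ] x t) ∧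
  (∀ s t : ℕ+, ¬ Even (s : ℕ) → β s t (x (s + t)) = x s ⊗ₜ[ℂ] y t) ∧
  (∀ s t : ℕ+, Even (s : ℕ) → β s t (y (s + t)) = y s ⊗ₜ[ℂ] y t) ∧
  (∀ s t : ℕ+, ¬ Even (s : ℕ) → β s t (y (s + t)) = y s ⊗ₜ[ℂ] x t)

/-- `(x, y)` is a basis of type `𝓔₃(λ)` of the subproduct system `(E, β)`. -/
def IsBasisE3 (l : ℂ) (x y : ∀ t : ℕ+, E t) : Prop :=
  (∀ t, ‖x t‖ = 1) ∧
  (∀ t : ℕ+, ‖y t‖ ^ 2 = ∑ k ∈ Finset.range (t : ℕ), ‖l‖ ^ (2 * k)) ∧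
  (∀ t : ℕ+, (inner ℂ (x t) (y t) : ℂ) = 0) ∧
  (∀ s t : ℕ+, β s t (x (s + t)) = x s ⊗ₜ[ℂ] x t) ∧
  (∀ s t : ℕ+, β s t (y (s + t)) = y s ⊗ₜ[ℂ] x t + l ^ (s : ℕ) • (x s ⊗ₜ[ℂ] y t))

/-- `(x, y)` is a basis of type `𝓔₄` of the subproduct system `(E, β)`. -/
def IsBasisE4 (x y : ∀ t : ℕ+, E t) : Prop :=
  (∀ t, ‖x t‖ = 1) ∧ (∀ t, ‖y t‖ = 1) ∧
  (∀ t : ℕ+, (inner ℂ (x t) (y t) : ℂ) = 0) ∧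
  (∀ s t : ℕ+, β s t (x (s + t)) = x s ⊗ₜ[ℂ] x t) ∧
  (∀ s t : ℕ+, β s t (y (s + t)) = y s ⊗ₜ[ℂ] x t)

/-- `(x, y)` is a basis of type `𝓔₅` of the subproduct system `(E, β)`. -/
def IsBasisE5 (x y : ∀ t : ℕ+, E t) : Prop :=
  (∀ t, ‖x t‖ = 1) ∧ (∀ t, ‖y t‖ = 1) ∧
  (∀ t : ℕ+, (inner ℂ (x t) (y t) : ℂ) = 0) ∧
  (∀ s t : ℕ+, β s t (x (s + t)) = x s ⊗ₜ[ℂ] x t) ∧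
  (∀ s t : ℕ+, β s t (y (s + t)) = x s ⊗ₜ[ℂ] y t)

/-- The five types of bases, together with their parameters. -/
inductive BType : Type
  | e1 (a : ℝ) | e2 (a : ℝ) | e3 (l : ℂ) | e4 | e5

/-- `(x, y)` is a basis of the subproduct system `(E, β)` of the given type (this includes
the admissibility constraints `a ∈ [0,1)`, resp. `λ ≠ 0`, on the parameter). -/
def IsBasisOfType : BType → (∀ t : ℕ+, E t) → (∀ t : ℕ+, E t) → Prop
  | .e1 a => fun x y => 0 ≤ a ∧ a < 1 ∧ IsBasisE1 E β a x y
  | .e2 a => fun x y => 0 ≤ a ∧ a < 1 ∧ IsBasisE2 E β a x y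
  | .e3 l => fun x y => l ≠ 0 ∧ IsBasisE3 E β l x y
  | .e4 => fun x y => IsBasisE4 E β x y
  | .e5 => fun x y => IsBasisE5 E β x y

/-- The family `θ` of unitaries intertwines the subproduct systems `(E, β)` and `(F, γ)`,
i.e. it is an isomorphism of subproduct systems. -/
def Intertwines (θ : ∀ t : ℕ+, E t ≃ₗᵢ[ℂ] F t) : Prop :=
  ∀ s t : ℕ+, ∀ w : E (s + t),
    γ s t (θ (s + t) w) =
      TensorProduct.map (θ s).toLinearEquiv.toLinearMap (θ t).toLinearEquiv.toLinearMap
        (β s t w)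

/-- The structure maps of the subproduct system `(E_{mt})_t` obtained by restricting
`(E, β)` to the multiples of `m`. -/
def restrictβ (m : ℕ+) :
    ∀ s t : ℕ+, E (m * (s + t)) →ₗᵢ[ℂ] (E (m * s) ⊗[ℂ] E (m * t)) := fun s t =>
  (β (m * s) (m * t)).comp (castE E (by rw [mul_add])).toLinearIsometry

end Discrete

/-! In coordinates given by orthonormal bases of `E₁` and `F₁`, the subspace `β₁,₁(E₂)` of
`E₁ ⊗ E₁` becomes a two-dimensional space of `2 × 2` matrices, the *pencil* of the basis type,
and the isomorphism acts on it by the congruence `M ↦ U M Uᵀ`, where `U` is the unitary matrix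
of `θ₁`. Congruence multiplies determinants by `det U ^ 2` and commutes with transposition, so
it preserves the properties "every element is singular", "spanned by singular elements",
"every element is symmetric" and "all elements have a common kernel vector"; these separate the
five types. For `𝓔₁(a)` and `𝓔₂(a)` the singular elements form two lines spanned by unit
matrices with Frobenius inner product `a²`, and a unitary congruence maps singular lines to
singular lines isometrically. For
`𝓔₃(λ)` the unique singular line `e ⊗ e` forces `U` to be diagonal, and then the second
generator `f ⊗ e + λ e ⊗ f` can only be matched if `λ` is the same. -/

lemma ofReal_sqrt_one_sub_sq_sq {a : ℝ} (ha : a ^ 2 ≤ 1) :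
    ((√(1 - a ^ 2) : ℝ) : ℂ) ^ 2 = 1 - (a : ℂ) ^ 2 := by
  rw [← Complex.ofReal_pow, Real.sq_sqrt (by linarith)]
  push_cast
  ring

lemma one_sub_sq_ne_zero_of_sq_lt_one {a : ℝ} (ha : a ^ 2 < 1) : 1 - (a : ℂ) ^ 2 ≠ 0 := by
  rw [← Complex.ofReal_pow, ← Complex.ofReal_one, ← Complex.ofReal_sub, Complex.ofReal_ne_zero]
  linarith

section InnerProduct

variable {F : Type*} [NormedAddCommGroup F] [InnerProductSpace ℂ F]

lemma linearIndependent_pair_of_norm_inner_lt {u v : F}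
    (h : ‖(inner ℂ u v : ℂ)‖ < ‖u‖ * ‖v‖) : LinearIndependent ℂ ![u, v] := by
  have hu : u ≠ 0 := by rintro rfl; simp at h
  refine (LinearIndependent.pair_iff' hu).mpr fun c hc => h.ne ?_
  subst hc
  rw [inner_smul_right, norm_mul, inner_self_eq_norm_sq_to_K, norm_smul, norm_pow,
    RCLike.norm_ofReal, abs_norm]
  ring

lemma OrthonormalBasis.equivFun_apply {ι : Type*} [Fintype ι] (b : OrthonormalBasis ι ℂ F)
    (p : F) : b.toBasis.equivFun p = fun i => (inner ℂ (b i) p : ℂ) := by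
  ext i
  rw [Module.Basis.equivFun_apply, OrthonormalBasis.coe_toBasis_repr_apply, b.repr_apply_apply]

lemma exists_orthonormalBasis_equivFun (hdim : Module.finrank ℂ F = 2) {x y : F} {a : ℝ}
    (hx : ‖x‖ = 1) (hy : ‖y‖ = 1) (hxy : inner ℂ x y = (a : ℂ)) (ha : a ^ 2 < 1) :
    ∃ b : OrthonormalBasis (Fin 2) ℂ F,
      b.toBasis.equivFun x = ![1, 0] ∧ b.toBasis.equivFun y = ![(a : ℂ), (√(1 - a ^ 2) : ℝ)] := by
  set c : ℝ := √(1 - a ^ 2)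
  have hc2 : (c : ℂ) ^ 2 = 1 - (a : ℂ) ^ 2 := ofReal_sqrt_one_sub_sq_sq ha.le
  have hcne : (c : ℂ) ≠ 0 := Complex.ofReal_ne_zero.mpr (Real.sqrt_pos.mpr (by linarith)).ne'
  have hxx : inner ℂ x x = (1 : ℂ) := inner_self_eq_one_of_norm_eq_one hx
  have hyy : inner ℂ y y = (1 : ℂ) := inner_self_eq_one_of_norm_eq_one hy
  set f : F := ((c : ℂ)⁻¹) • (y - (a : ℂ) • x)
  have hxf : inner ℂ x f = (0 : ℂ) := by
    simp only [f, inner_smul_right, inner_sub_right, hxx, hxy]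
    ring
  have hfx : inner ℂ f x = (0 : ℂ) := by rw [← inner_conj_symm, hxf, map_zero]
  have hfy : inner ℂ f y = (c : ℂ) := by
    simp only [f, inner_smul_left, inner_sub_left, hyy, hxy, map_inv₀, Complex.conj_ofReal]
    field_simp
    linear_combination -hc2
  have hfn : ‖f‖ = 1 := by
    have hff : inner ℂ f f = (1 : ℂ) := by
      simp only [f, inner_smul_right, inner_sub_right, hfy, hfx, mul_zero, sub_zero]
      field_simp
    have h := inner_self_eq_norm_sq (𝕜 := ℂ) f
    rw [hff, RCLike.one_re] at h
    exact (pow_eq_one_iff_of_nonneg (norm_nonneg f) two_ne_zero).mp h.symm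
  have hon : Orthonormal ℂ ![x, f] := by
    rw [orthonormal_iff_ite]
    intro i j
    fin_cases i <;> fin_cases j <;> simp [hxf, hfx, inner_self_eq_norm_sq_to_K, hx, hfn]
  have hspan := hon.linearIndependent.span_eq_top_of_card_eq_finrank (by simp [hdim])
  refine ⟨OrthonormalBasis.mk hon hspan.ge, ?_, ?_⟩ <;> rw [OrthonormalBasis.equivFun_apply] <;>
    ext i <;> fin_cases i <;> simp [hfx, hxy, hfy, hx]

end InnerProduct

section MatrixCongruence

open Matrix

variable {n : Type*} [Fintype n]

def congruence (U : Matrix n n ℂ) : Matrix n n ℂ →ₗ[ℂ] Matrix n n ℂ where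
  toFun M := U * M * Uᵀ
  map_add' M N := by simp [Matrix.mul_add, Matrix.add_mul]
  map_smul' c M := by simp

@[simp] lemma congruence_apply (U M : Matrix n n ℂ) : congruence U M = U * M * Uᵀ := rfl

lemma congruence_vecMulVec (U : Matrix n n ℂ) (p q : n → ℂ) :
    congruence U (vecMulVec p q) = vecMulVec (U *ᵥ p) (U *ᵥ q) := by
  rw [congruence_apply, mul_vecMulVec, vecMulVec_mul, vecMul_transpose]

lemma transpose_congruence (U M : Matrix n n ℂ) : (congruence U M)ᵀ = congruence U Mᵀ := by
  simp [Matrix.mul_assoc]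

lemma det_congruence [DecidableEq n] (U M : Matrix n n ℂ) :
    (congruence U M).det = U.det ^ 2 * M.det := by
  rw [congruence_apply, det_mul, det_mul, det_transpose]
  ring

lemma congruence_star_congruence [DecidableEq n] {U : Matrix n n ℂ}
    (hU : U ∈ unitaryGroup n ℂ) (M : Matrix n n ℂ) :
    congruence (star U) (congruence U M) = M := by
  have h : star U * U = 1 := mem_unitaryGroup_iff'.mp hU
  simp only [congruence_apply, ← Matrix.mul_assoc, h, Matrix.one_mul]
  rw [Matrix.mul_assoc, ← transpose_mul, h, transpose_one, Matrix.mul_one]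

lemma map_congruence_star [DecidableEq n] {U : Matrix n n ℂ} (hU : U ∈ unitaryGroup n ℂ)
    {V V' : Submodule ℂ (Matrix n n ℂ)} (h : V.map (congruence U) = V') :
    V'.map (congruence (star U)) = V := by
  rw [← h, ← Submodule.map_comp]
  convert Submodule.map_id V
  ext1 M
  exact congruence_star_congruence hU M

lemma iff_of_map_congruence [DecidableEq n] {P : Submodule ℂ (Matrix n n ℂ) → Prop}
    (hP : ∀ U ∈ unitaryGroup n ℂ, ∀ V, P V → P (V.map (congruence U)))
    {U : Matrix n n ℂ} (hU : U ∈ unitaryGroup n ℂ)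
    {V V' : Submodule ℂ (Matrix n n ℂ)} (h : V.map (congruence U) = V') : P V ↔ P V' :=
  ⟨fun hV => h ▸ hP U hU V hV,
    fun hV' => map_congruence_star hU h ▸ hP _ (Unitary.star_mem hU) V' hV'⟩

def frobeniusInner (A B : Matrix n n ℂ) : ℂ := (Aᴴ * B).trace

lemma frobeniusInner_congruence [DecidableEq n] {U : Matrix n n ℂ} (hU : U ∈ unitaryGroup n ℂ)
    (A B : Matrix n n ℂ) :
    frobeniusInner (congruence U A) (congruence U B) = frobeniusInner A B := by
  have hU' : Uᴴ * U = 1 := mem_unitaryGroup_iff'.mp hU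
  have hUt : Uᵀ * Uᵀᴴ = 1 := by
    rw [← transpose_one, ← hU', transpose_mul]
    rfl
  simp only [frobeniusInner, congruence_apply, conjTranspose_mul, Matrix.mul_assoc]
  rw [← Matrix.mul_assoc Uᴴ U, hU', Matrix.one_mul, trace_mul_comm, Matrix.mul_assoc,
    Matrix.mul_assoc, hUt, Matrix.mul_one]

@[simp] lemma frobeniusInner_smul_left (c : ℂ) (A B : Matrix n n ℂ) :
    frobeniusInner (c • A) B = star c * frobeniusInner A B := by
  simp [frobeniusInner]

@[simp] lemma frobeniusInner_smul_right (c : ℂ) (A B : Matrix n n ℂ) :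
    frobeniusInner A (c • B) = c * frobeniusInner A B := by
  simp [frobeniusInner]

lemma frobeniusInner_comm (A B : Matrix n n ℂ) :
    frobeniusInner B A = star (frobeniusInner A B) := by
  rw [frobeniusInner, frobeniusInner, ← trace_conjTranspose, conjTranspose_mul,
    conjTranspose_conjTranspose]

lemma frobeniusInner_vecMulVec (p q r s : n → ℂ) :
    frobeniusInner (vecMulVec p q) (vecMulVec r s) = (star p ⬝ᵥ r) * (star q ⬝ᵥ s) := by
  rw [frobeniusInner, conjTranspose_vecMulVec, vecMulVec_mul_vecMulVec, trace_vecMulVec,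
    dotProduct_smul, smul_eq_mul, mul_comm]

lemma norm_eq_one_of_frobeniusInner_smul {c : ℂ} {R : Matrix n n ℂ}
    (hR : frobeniusInner R R = 1) (h : frobeniusInner (c • R) (c • R) = 1) : ‖c‖ = 1 := by
  rw [frobeniusInner_smul_left, frobeniusInner_smul_right, hR, mul_one, Complex.star_def,
    ← Complex.normSq_eq_conj_mul_self, Complex.normSq_eq_norm_sq] at h
  exact (pow_eq_one_iff_of_nonneg (norm_nonneg c) two_ne_zero).mp (by exact_mod_cast h)

lemma norm_frobeniusInner_of_congruence_mem_lines [DecidableEq n] {U : Matrix n n ℂ}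
    (hU : U ∈ unitaryGroup n ℂ) {X Y P Q : Matrix n n ℂ}
    (hX : frobeniusInner X X = 1) (hY : frobeniusInner Y Y = 1)
    (hP : frobeniusInner P P = 1) (hQ : frobeniusInner Q Q = 1)
    (hXPQ : ∃ c : ℂ, ∃ A ∈ ({P, Q} : Set (Matrix n n ℂ)), congruence U X = c • A)
    (hYPQ : ∃ c : ℂ, ∃ B ∈ ({P, Q} : Set (Matrix n n ℂ)), congruence U Y = c • B) :
    ‖frobeniusInner X Y‖ = 1 ∨ ‖frobeniusInner X Y‖ = ‖frobeniusInner P Q‖ := by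
  obtain ⟨c, A, hA, hc⟩ := hXPQ
  obtain ⟨d, B, hB, hd⟩ := hYPQ
  have hunit : ∀ R ∈ ({P, Q} : Set (Matrix n n ℂ)), frobeniusInner R R = 1 := by
    rintro R (rfl | rfl) <;> assumption
  rw [← frobeniusInner_congruence hU, hc] at hX ⊢
  rw [← frobeniusInner_congruence hU, hd] at hY
  rw [hd, frobeniusInner_smul_left, frobeniusInner_smul_right, norm_mul, norm_mul, norm_star,
    norm_eq_one_of_frobeniusInner_smul (hunit A hA) hX,
    norm_eq_one_of_frobeniusInner_smul (hunit B hB) hY, one_mul, one_mul]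
  rcases hA with rfl | rfl <;> rcases hB with rfl | rfl
  · simp [hP]
  · simp
  · simp [frobeniusInner_comm A]
  · simp [hQ]

end MatrixCongruence

section Invariants

open Matrix

variable {n : Type*}

def AllSymmetric (V : Submodule ℂ (Matrix n n ℂ)) : Prop := ∀ M ∈ V, M.IsSymm

variable [Fintype n]

def AllSingular [DecidableEq n] (V : Submodule ℂ (Matrix n n ℂ)) : Prop := ∀ M ∈ V, M.det = 0

def SpannedBySingular [DecidableEq n] (V : Submodule ℂ (Matrix n n ℂ)) : Prop :=
  V ≤ Submodule.span ℂ {M | M ∈ V ∧ M.det = 0}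

def HasCommonKernel (V : Submodule ℂ (Matrix n n ℂ)) : Prop := ∃ v ≠ 0, ∀ M ∈ V, M *ᵥ v = 0

variable {V : Submodule ℂ (Matrix n n ℂ)}

lemma AllSingular.map_congruence [DecidableEq n] (h : AllSingular V) (U : Matrix n n ℂ) :
    AllSingular (V.map (congruence U)) := by
  rintro _ ⟨M, hM, rfl⟩
  rw [det_congruence, h M hM, mul_zero]

lemma SpannedBySingular.map_congruence [DecidableEq n] (h : SpannedBySingular V)
    (U : Matrix n n ℂ) : SpannedBySingular (V.map (congruence U)) := by
  refine (Submodule.map_mono h).trans ?_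
  rw [Submodule.map_span]
  refine Submodule.span_mono ?_
  rintro _ ⟨M, ⟨hMV, hMdet⟩, rfl⟩
  exact ⟨⟨M, hMV, rfl⟩, by rw [det_congruence, hMdet, mul_zero]⟩

lemma AllSymmetric.map_congruence (h : AllSymmetric V) (U : Matrix n n ℂ) :
    AllSymmetric (V.map (congruence U)) := by
  rintro _ ⟨M, hM, rfl⟩
  exact (transpose_congruence U M).trans (congrArg _ (h M hM))

lemma HasCommonKernel.map_congruence [DecidableEq n] (h : HasCommonKernel V)
    {U : Matrix n n ℂ} (hU : U ∈ unitaryGroup n ℂ) : HasCommonKernel (V.map (congruence U)) := by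
  obtain ⟨v, hv, hker⟩ := h
  have hUt : Uᵀ * (star U)ᵀ = 1 := by
    rw [← transpose_mul, mem_unitaryGroup_iff'.mp hU, transpose_one]
  refine ⟨(star U)ᵀ *ᵥ v, fun h0 => hv ?_, ?_⟩
  · rw [← one_mulVec v, ← hUt, ← mulVec_mulVec, h0, mulVec_zero]
  · rintro _ ⟨M, hM, rfl⟩
    rw [congruence_apply, ← mulVec_mulVec, mulVec_mulVec _ Uᵀ, hUt, one_mulVec, ← mulVec_mulVec,
      hker M hM, mulVec_zero]

end Invariants

namespace BType

open Matrix

def Admissible : BType → Prop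
  | e1 a | e2 a => 0 ≤ a ∧ a < 1
  | e3 l => l ≠ 0
  | e4 | e5 => True

/-- `⟨x₁, y₁⟩` for a basis of the given type. -/
def overlap : BType → ℝ
  | e1 a | e2 a => a
  | _ => 0

lemma Admissible.overlap_nonneg {bt : BType} (h : bt.Admissible) : 0 ≤ bt.overlap := by
  cases bt <;> first | exact h.1 | exact le_rfl

lemma Admissible.overlap_lt_one {bt : BType} (h : bt.Admissible) : bt.overlap < 1 := by
  cases bt <;> first | exact h.2 | exact zero_lt_one

lemma Admissible.overlap_sq_lt_one {bt : BType} (h : bt.Admissible) : bt.overlap ^ 2 < 1 := by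
  nlinarith [h.overlap_nonneg, h.overlap_lt_one]

/-- The vectors `β₁,₁(x₂), β₁,₁(y₂)` prescribed by the type, in terms of `x₁ = p` and `y₁ = q`,
with the tensor product abstracted to a bilinear map `f`. -/
def timeTwo {V W : Type*} [AddCommMonoid V] [Module ℂ V] [AddCommMonoid W] [Module ℂ W] :
    BType → (V →ₗ[ℂ] V →ₗ[ℂ] W) → V → V → Fin 2 → W
  | e1 _, f, p, q => ![f p p, f q q]
  | e2 _, f, p, q => ![f p q, f q p]
  | e3 l, f, p, q => ![f p p, f q p + l • f p q]
  | e4, f, p, q => ![f p p, f q p]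
  | e5, f, p, q => ![f p p, f p q]

section TimeTwo

variable {V V' W W' : Type*} [AddCommMonoid V] [Module ℂ V] [AddCommMonoid V'] [Module ℂ V']
  [AddCommMonoid W] [Module ℂ W] [AddCommMonoid W'] [Module ℂ W']

lemma timeTwo_compr₂ (bt : BType) (f : V →ₗ[ℂ] V →ₗ[ℂ] W) (g : W →ₗ[ℂ] W') (p q : V) :
    bt.timeTwo (f.compr₂ g) p q = g ∘ bt.timeTwo f p q := by
  ext i
  fin_cases i <;> cases bt <;> simp [timeTwo]

lemma timeTwo_compl₁₂ (bt : BType) (f : V →ₗ[ℂ] V →ₗ[ℂ] W) (g : V' →ₗ[ℂ] V) (p q : V') :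
    bt.timeTwo (f.compl₁₂ g g) p q = bt.timeTwo f (g p) (g q) := by
  cases bt <;> rfl

end TimeTwo

/-- The coordinates of `y₁` in an orthonormal basis of `E₁` whose first vector is `x₁`. -/
def secondVec (bt : BType) : Fin 2 → ℂ := ![bt.overlap, √(1 - bt.overlap ^ 2)]

lemma secondVec_eq_of_overlap_eq_zero {bt : BType} (h : bt.overlap = 0) :
    bt.secondVec = ![0, 1] := by
  simp [secondVec, h]

def pencilGen (bt : BType) : Fin 2 → Matrix (Fin 2) (Fin 2) ℂ :=
  bt.timeTwo (vecMulVecBilin ℂ ℂ) ![1, 0] bt.secondVec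

/-- The coefficient matrices of the elements of `β₁,₁(E₂) ⊆ E₁ ⊗ E₁`. -/
def pencil (bt : BType) : Submodule ℂ (Matrix (Fin 2) (Fin 2) ℂ) :=
  Submodule.span ℂ (Set.range bt.pencilGen)

lemma mem_pencil {bt : BType} {M : Matrix (Fin 2) (Fin 2) ℂ} :
    M ∈ bt.pencil ↔ ∃ s t : ℂ, s • bt.pencilGen 0 + t • bt.pencilGen 1 = M := by
  simp only [pencil, Submodule.mem_span_range_iff_exists_fun, Fin.sum_univ_two]
  exact ⟨fun ⟨c, h⟩ => ⟨c 0, c 1, h⟩, fun ⟨s, t, h⟩ => ⟨![s, t], h⟩⟩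

lemma pencilGen_mem_pencil (bt : BType) (i : Fin 2) : bt.pencilGen i ∈ bt.pencil :=
  Submodule.subset_span ⟨i, rfl⟩

def detForm : BType → ℂ → ℂ → ℂ
  | e1 a, s, t => s * t * (1 - a ^ 2)
  | e2 a, s, t => -(s * t * (1 - a ^ 2))
  | e3 l, _, t => -(l * t ^ 2)
  | e4, _, _ | e5, _, _ => 0

lemma det_pencilGen {bt : BType} (h : bt.Admissible) (s t : ℂ) :
    (s • bt.pencilGen 0 + t • bt.pencilGen 1).det = bt.detForm s t := by
  have hc := ofReal_sqrt_one_sub_sq_sq h.overlap_sq_lt_one.le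
  rcases bt with a | a | l | _ | _ <;>
    simp only [pencilGen, timeTwo, secondVec, overlap, detForm, vecMulVecBilin_apply_apply,
      det_fin_two, Matrix.add_apply, Matrix.smul_apply, vecMulVec_apply, cons_val_zero,
      cons_val_one, smul_eq_mul, Complex.ofReal_zero] at hc ⊢
  · linear_combination (s * t) * hc
  · linear_combination -(s * t) * hc
  · linear_combination -(l * t ^ 2) * hc
  · ring
  · ring

lemma det_pencilGen_zero (bt : BType) : (bt.pencilGen 0).det = 0 := by
  cases bt <;>
    simp only [pencilGen, timeTwo, cons_val_zero, vecMulVecBilin_apply_apply, det_vecMulVec]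

lemma det_pencilGen_one {bt : BType} (h : ∀ l, bt ≠ e3 l) : (bt.pencilGen 1).det = 0 := by
  cases bt with
  | e3 l => exact absurd rfl (h l)
  | _ =>
    simp only [pencilGen, timeTwo, cons_val_one, cons_val_zero, vecMulVecBilin_apply_apply,
      det_vecMulVec]

lemma allSingular_pencil_iff_detForm {bt : BType} (h : bt.Admissible) :
    AllSingular bt.pencil ↔ ∀ s t, bt.detForm s t = 0 := by
  refine ⟨fun hsing s t => ?_, fun hform M hM => ?_⟩
  · rw [← det_pencilGen h]
    exact hsing _ (mem_pencil.mpr ⟨s, t, rfl⟩)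
  · obtain ⟨s, t, rfl⟩ := mem_pencil.mp hM
    rw [det_pencilGen h, hform]

lemma allSingular_pencil_iff {bt : BType} (h : bt.Admissible) :
    AllSingular bt.pencil ↔ bt = e4 ∨ bt = e5 := by
  rw [allSingular_pencil_iff_detForm h]
  cases bt with
  | e1 a | e2 a =>
    simp only [reduceCtorEq, or_self, iff_false, not_forall]
    exact ⟨1, 1, by simpa only [detForm, one_mul, neg_eq_zero] using
      one_sub_sq_ne_zero_of_sq_lt_one (a := a) h.overlap_sq_lt_one⟩
  | e3 l =>
    simp only [reduceCtorEq, or_self, iff_false, not_forall]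
    have hl : l ≠ 0 := h
    exact ⟨1, 1, by simpa [detForm] using hl⟩
  | e4 | e5 => simp [detForm]

lemma spannedBySingular_pencil_iff {bt : BType} (h : bt.Admissible) :
    SpannedBySingular bt.pencil ↔ ∀ l, bt ≠ e3 l := by
  refine ⟨?_, fun hne => Submodule.span_le.mpr ?_⟩
  · rintro hspan l rfl
    have hl : l ≠ 0 := h
    have hsing : {M | M ∈ (e3 l).pencil ∧ M.det = 0} ⊆
        Submodule.span ℂ {(e3 l).pencilGen 0} := by
      rintro M ⟨hM, hdet⟩
      obtain ⟨s, t, rfl⟩ := mem_pencil.mp hM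
      have ht : t = 0 := by simpa [det_pencilGen h, detForm, hl] using hdet
      exact Submodule.mem_span_singleton.mpr ⟨s, by simp [ht]⟩
    obtain ⟨c, hc⟩ := Submodule.mem_span_singleton.mp
      (Submodule.span_le.mpr hsing (hspan (pencilGen_mem_pencil _ 1)))
    simpa [pencilGen, timeTwo, secondVec, overlap] using congrFun₂ hc 1 0
  · rintro _ ⟨i, rfl⟩
    refine Submodule.subset_span ⟨pencilGen_mem_pencil _ i, ?_⟩
    fin_cases i
    exacts [det_pencilGen_zero bt, det_pencilGen_one hne]

lemma allSymmetric_pencil_e1 (a : ℝ) : AllSymmetric (e1 a).pencil := by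
  intro M hM
  obtain ⟨s, t, rfl⟩ := mem_pencil.mp hM
  simp only [IsSymm, pencilGen, timeTwo, cons_val_zero, cons_val_one, vecMulVecBilin_apply_apply,
    transpose_add, transpose_smul, transpose_vecMulVec]

lemma not_allSymmetric_pencil_e2 {a : ℝ} (h : (e2 a).Admissible) :
    ¬ AllSymmetric (e2 a).pencil := by
  intro hsymm
  have h10 := congrFun₂ (hsymm _ (pencilGen_mem_pencil _ 0)) 1 0
  have ha : a ^ 2 < 1 := h.overlap_sq_lt_one
  have hc : 0 < √(1 - a ^ 2) := Real.sqrt_pos.mpr (by linarith)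
  simp [pencilGen, timeTwo, secondVec, overlap, hc.ne'] at h10

lemma hasCommonKernel_pencil_e4 : HasCommonKernel e4.pencil := by
  refine ⟨![0, 1], by simp, fun M hM => ?_⟩
  obtain ⟨s, t, rfl⟩ := mem_pencil.mp hM
  simp only [pencilGen, timeTwo, cons_val_zero, cons_val_one, vecMulVecBilin_apply_apply,
    add_mulVec, smul_mulVec, vecMulVec_mulVec, secondVec_eq_of_overlap_eq_zero (bt := e4) rfl]
  simp

lemma not_hasCommonKernel_pencil_e5 : ¬ HasCommonKernel e5.pencil := by
  rintro ⟨v, hv, hker⟩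
  have hker' : ∀ i, ((e5.pencilGen i) *ᵥ v) 0 = 0 := fun i =>
    congrFun (hker _ (pencilGen_mem_pencil _ i)) 0
  refine hv (funext fun i => ?_)
  fin_cases i
  · simpa [pencilGen, timeTwo, vecMulVec_mulVec] using hker' 0
  · simpa [pencilGen, timeTwo, vecMulVec_mulVec, secondVec_eq_of_overlap_eq_zero (bt := e5) rfl]
      using hker' 1

/-- The types whose pencil contains exactly two lines of singular matrices. -/
def IsTwoLine : BType → Prop
  | e1 _ | e2 _ => True
  | _ => False

lemma IsTwoLine.ne_e3 {bt : BType} (h2 : bt.IsTwoLine) (l : ℂ) : bt ≠ e3 l := by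
  rintro rfl
  exact h2

lemma IsTwoLine.frobeniusInner_pencilGen {bt : BType} (h2 : bt.IsTwoLine) (h : bt.Admissible) :
    frobeniusInner (bt.pencilGen 0) (bt.pencilGen 0) = 1 ∧
      frobeniusInner (bt.pencilGen 1) (bt.pencilGen 1) = 1 ∧
      frobeniusInner (bt.pencilGen 0) (bt.pencilGen 1) = (bt.overlap : ℂ) ^ 2 := by
  have hdot : ∀ p q : Fin 2 → ℂ, star p ⬝ᵥ q = star (p 0) * q 0 + star (p 1) * q 1 := by
    simp [dotProduct, Fin.sum_univ_two]
  have hc := ofReal_sqrt_one_sub_sq_sq h.overlap_sq_lt_one.le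
  cases bt with
  | e1 a =>
    simp only [pencilGen, timeTwo, secondVec, overlap, cons_val_zero, cons_val_one,
      vecMulVecBilin_apply_apply, frobeniusInner_vecMulVec, hdot, star_one, star_zero,
      Complex.star_def, Complex.conj_ofReal] at hc ⊢
    refine ⟨by ring, ?_, by ring⟩
    linear_combination (1 + (a : ℂ) ^ 2 + ((√(1 - a ^ 2) : ℝ) : ℂ) ^ 2) * hc
  | e2 a =>
    simp only [pencilGen, timeTwo, secondVec, overlap, cons_val_zero, cons_val_one,
      vecMulVecBilin_apply_apply, frobeniusInner_vecMulVec, hdot, star_one, star_zero,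
      Complex.star_def, Complex.conj_ofReal] at hc ⊢
    exact ⟨by linear_combination hc, by linear_combination hc, by ring⟩
  | _ => exact h2.elim

lemma IsTwoLine.exists_smul_pencilGen_of_det_eq_zero {bt : BType} (h2 : bt.IsTwoLine)
    (h : bt.Admissible) {M : Matrix (Fin 2) (Fin 2) ℂ} (hM : M ∈ bt.pencil) (hdet : M.det = 0) :
    ∃ c : ℂ, ∃ A ∈ ({bt.pencilGen 0, bt.pencilGen 1} : Set _), M = c • A := by
  obtain ⟨s, t, rfl⟩ := mem_pencil.mp hM
  rw [det_pencilGen h] at hdet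
  have hst : s = 0 ∨ t = 0 := by
    cases bt with
    | e1 a | e2 a =>
      simpa [detForm, one_sub_sq_ne_zero_of_sq_lt_one (a := a) h.overlap_sq_lt_one] using hdet
    | _ => exact h2.elim
  rcases hst with rfl | rfl
  · exact ⟨t, _, Or.inr rfl, by simp⟩
  · exact ⟨s, _, Or.inl rfl, by simp⟩

lemma overlap_eq_of_map_pencil {bt bt' : BType} (h : bt.Admissible) (h' : bt'.Admissible)
    (h2 : bt.IsTwoLine) (h2' : bt'.IsTwoLine) {U : Matrix (Fin 2) (Fin 2) ℂ}
    (hU : U ∈ unitaryGroup (Fin 2) ℂ) (hmap : bt.pencil.map (congruence U) = bt'.pencil) :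
    bt.overlap = bt'.overlap := by
  have hline : ∀ i, ∃ c : ℂ, ∃ A ∈ ({bt'.pencilGen 0, bt'.pencilGen 1} : Set _),
      congruence U (bt.pencilGen i) = c • A := by
    intro i
    refine h2'.exists_smul_pencilGen_of_det_eq_zero h'
      (hmap ▸ Submodule.mem_map_of_mem (pencilGen_mem_pencil bt i)) ?_
    fin_cases i <;> simp only [det_congruence, Fin.zero_eta, Fin.mk_one, det_pencilGen_zero,
      det_pencilGen_one h2.ne_e3, mul_zero]
  obtain ⟨hX, hY, hXY⟩ := h2.frobeniusInner_pencilGen h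
  obtain ⟨hP, hQ, hPQ⟩ := h2'.frobeniusInner_pencilGen h'
  have ha := h.overlap_nonneg
  have hb := h'.overlap_nonneg
  rcases norm_frobeniusInner_of_congruence_mem_lines hU hX hY hP hQ (hline 0) (hline 1) with
    h1 | h1 <;> rw [hXY] at h1
  · rw [← Complex.ofReal_pow, Complex.norm_real, Real.norm_of_nonneg (by positivity)] at h1
    nlinarith [h.overlap_sq_lt_one]
  · rw [hPQ, ← Complex.ofReal_pow, ← Complex.ofReal_pow, Complex.norm_real, Complex.norm_real,
      Real.norm_of_nonneg (by positivity), Real.norm_of_nonneg (by positivity)] at h1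
    nlinarith [sq_nonneg (bt.overlap - bt'.overlap), sq_nonneg (bt.overlap + bt'.overlap)]

lemma eq_of_map_pencil_e3 {l m : ℂ} (hm : (e3 m).Admissible) {U : Matrix (Fin 2) (Fin 2) ℂ}
    (hU : U ∈ unitaryGroup (Fin 2) ℂ) (hmap : (e3 l).pencil.map (congruence U) = (e3 m).pencil) :
    l = m := by
  have hm0 : m ≠ 0 := hm
  have hmem : ∀ i, congruence U ((e3 l).pencilGen i) ∈ (e3 m).pencil := fun i =>
    hmap ▸ Submodule.mem_map_of_mem (pencilGen_mem_pencil _ i)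
  have hunit := congrFun₂ (mem_unitaryGroup_iff'.mp hU)
  -- `U (e ⊗ e)` is singular, hence a multiple of `e ⊗ e`; so `U` is diagonal.
  obtain ⟨s, t, hst⟩ := mem_pencil.mp (hmem 0)
  have ht : t = 0 := by
    have hdet := congrArg det hst
    rw [det_pencilGen hm, det_congruence, det_pencilGen_zero, mul_zero] at hdet
    simpa [detForm, hm0] using hdet
  have hU10 : U 1 0 = 0 := by
    have h11 := congrFun₂ hst 1 1
    simp only [ht, pencilGen, timeTwo, cons_val_zero, vecMulVecBilin_apply_apply,
      congruence_vecMulVec, zero_smul, add_zero] at h11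
    simpa [vecMulVec_apply, mulVec, dotProduct, Fin.sum_univ_two, eq_comm] using h11
  have hU00 : U 0 0 ≠ 0 := by
    have h00 := hunit 0 0
    simp only [mul_apply, Fin.sum_univ_two, star_apply, hU10] at h00
    rintro h
    simp [h] at h00
  have hU01 : U 0 1 = 0 := by
    simpa [mul_apply, Fin.sum_univ_two, hU10, hU00] using hunit 0 1
  have hU11 : U 1 1 ≠ 0 := by
    have h11 := hunit 1 1
    simp only [mul_apply, Fin.sum_univ_two, star_apply, hU01] at h11
    rintro h
    simp [h] at h11
  obtain ⟨s', t', hst'⟩ := mem_pencil.mp (hmem 1)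
  simp only [pencilGen, timeTwo, cons_val_zero, cons_val_one, vecMulVecBilin_apply_apply,
    congruence_vecMulVec, map_add, map_smul] at hst'
  have e10 := congrFun₂ hst' 1 0
  have e01 := congrFun₂ hst' 0 1
  simp only [secondVec_eq_of_overlap_eq_zero (bt := e3 l) rfl,
    secondVec_eq_of_overlap_eq_zero (bt := e3 m) rfl, vecMulVec_apply, Matrix.add_apply,
    Matrix.smul_apply, smul_eq_mul, mulVec, dotProduct, Fin.sum_univ_two, cons_val_zero,
    cons_val_one, hU10, hU01, mul_one, mul_zero, add_zero, zero_add] at e10 e01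
  have : (U 0 0 * U 1 1) * (l - m) = 0 := by linear_combination e10 * m - e01
  exact sub_eq_zero.mp ((mul_eq_zero.mp this).resolve_left (mul_ne_zero hU00 hU11))

theorem eq_of_map_pencil {bt bt' : BType} (h : bt.Admissible) (h' : bt'.Admissible)
    {U : Matrix (Fin 2) (Fin 2) ℂ} (hU : U ∈ unitaryGroup (Fin 2) ℂ)
    (hmap : bt.pencil.map (congruence U) = bt'.pencil) : bt = bt' := by
  have hsing := iff_of_map_congruence (P := AllSingular)
    (fun U _ _ hV => hV.map_congruence U) hU hmap
  have hspan := iff_of_map_congruence (P := SpannedBySingular)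
    (fun U _ _ hV => hV.map_congruence U) hU hmap
  have hsymm := iff_of_map_congruence (P := AllSymmetric)
    (fun U _ _ hV => hV.map_congruence U) hU hmap
  have hker := iff_of_map_congruence (P := HasCommonKernel)
    (fun _ hU _ hV => hV.map_congruence hU) hU hmap
  rw [allSingular_pencil_iff h, allSingular_pencil_iff h'] at hsing
  rw [spannedBySingular_pencil_iff h, spannedBySingular_pencil_iff h'] at hspan
  rcases bt with a | a | l | _ | _ <;> rcases bt' with b | b | m | _ | _ <;>
    simp only [reduceCtorEq, e1.injEq, e2.injEq, e3.injEq, or_self, or_true, or_false, iff_true,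
      iff_false, ne_eq, not_true_eq_false, not_false_eq_true, implies_true, forall_eq']
      at hsing hspan ⊢
  · exact overlap_eq_of_map_pencil h h' trivial trivial hU hmap
  · exact not_allSymmetric_pencil_e2 h' (hsymm.mp (allSymmetric_pencil_e1 a))
  · exact not_allSymmetric_pencil_e2 h (hsymm.mpr (allSymmetric_pencil_e1 b))
  · exact overlap_eq_of_map_pencil h h' trivial trivial hU hmap
  · exact eq_of_map_pencil_e3 h' hU hmap
  · exact not_hasCommonKernel_pencil_e5 (hker.mp hasCommonKernel_pencil_e4)
  · exact not_hasCommonKernel_pencil_e5 (hker.mpr hasCommonKernel_pencil_e4)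

end BType

section TensorMatrix

open Matrix

variable {H K : Type*} [AddCommGroup H] [Module ℂ H] [AddCommGroup K] [Module ℂ K]
  {ι : Type*} [Fintype ι]

def tensorMatrix (b : Module.Basis ι ℂ H) : H ⊗[ℂ] H →ₗ[ℂ] Matrix ι ι ℂ :=
  TensorProduct.lift ((vecMulVecBilin ℂ ℂ).compl₁₂ b.equivFun.toLinearMap b.equivFun.toLinearMap)

lemma tensorMatrix_tmul (b : Module.Basis ι ℂ H) (p q : H) :
    tensorMatrix b (p ⊗ₜ q) = vecMulVec (b.equivFun p) (b.equivFun q) :=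
  TensorProduct.lift.tmul _ _

lemma mk_compr₂_tensorMatrix (b : Module.Basis ι ℂ H) :
    (TensorProduct.mk ℂ H H).compr₂ (tensorMatrix b) =
      (vecMulVecBilin ℂ ℂ).compl₁₂ b.equivFun.toLinearMap b.equivFun.toLinearMap :=
  LinearMap.ext₂ fun p q => by simp [tensorMatrix_tmul]

lemma tensorMatrix_map [DecidableEq ι] (f : H →ₗ[ℂ] K) (b : Module.Basis ι ℂ H)
    (b' : Module.Basis ι ℂ K) (z : H ⊗[ℂ] H) :
    tensorMatrix b' (TensorProduct.map f f z) =
      congruence (LinearMap.toMatrix b b' f) (tensorMatrix b z) := by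
  induction z using TensorProduct.induction_on with
  | zero => simp
  | tmul p q =>
    simp only [TensorProduct.map_tmul, tensorMatrix_tmul, congruence_vecMulVec,
      Module.Basis.equivFun_apply, LinearMap.toMatrix_mulVec_repr]
  | add z w hz hw => simp only [map_add, hz, hw]

end TensorMatrix

section Bases

variable {E : ℕ+ → Type*} [∀ t, NormedAddCommGroup (E t)] [∀ t, InnerProductSpace ℂ (E t)]
  {β : ∀ s t : ℕ+, E (s + t) →ₗᵢ[ℂ] (E s ⊗[ℂ] E t)} {bt : BType} {x y : ∀ t : ℕ+, E t}

lemma IsBasisOfType.admissible (h : IsBasisOfType E β bt x y) : bt.Admissible := by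
  cases bt with
  | e1 a | e2 a => exact ⟨h.1, h.2.1⟩
  | e3 l => exact h.1
  | e4 | e5 => trivial

lemma IsBasisOfType.timeOne (h : IsBasisOfType E β bt x y) :
    ‖x 1‖ = 1 ∧ ‖y 1‖ = 1 ∧ inner ℂ (x 1) (y 1) = (bt.overlap : ℂ) := by
  cases bt with
  | e1 a => exact ⟨h.2.2.1 1, h.2.2.2.1 1, by simpa [BType.overlap] using h.2.2.2.2.1 1⟩
  | e2 a => exact ⟨h.2.2.1 1, h.2.2.2.1 1, by simpa [BType.overlap] using h.2.2.2.2.1 1⟩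
  | e3 l =>
    obtain ⟨-, hx, hy, hxy, -⟩ := h
    refine ⟨hx 1, (pow_eq_one_iff_of_nonneg (norm_nonneg _) two_ne_zero).mp ?_,
      by simpa [BType.overlap] using hxy 1⟩
    simpa using hy 1
  | e4 | e5 => exact ⟨h.1 1, h.2.1 1, by simpa [BType.overlap] using h.2.2.1 1⟩

lemma IsBasisOfType.norm_inner_lt (h : IsBasisOfType E β bt x y) (t : ℕ+) :
    ‖(inner ℂ (x t) (y t) : ℂ)‖ < ‖x t‖ * ‖y t‖ := by
  cases bt with
  | e1 a | e2 a =>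
    obtain ⟨h0, h1, hx, hy, hxy, -⟩ := h
    rw [hxy, hx, hy, norm_pow, Complex.norm_real, Real.norm_of_nonneg h0, one_mul]
    exact pow_lt_one₀ h0 h1 t.ne_zero
  | e3 l =>
    obtain ⟨-, hx, hy, hxy, -⟩ := h
    have hsum : 1 ≤ ‖y t‖ ^ 2 := by
      rw [hy t]
      exact (Finset.single_le_sum (f := fun k => ‖l‖ ^ (2 * k)) (fun _ _ => by positivity)
        (Finset.mem_range.mpr t.pos)).trans_eq' (by simp)
    rw [hxy, hx, norm_zero, one_mul]
    nlinarith [norm_nonneg (y t)]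
  | e4 | e5 =>
    obtain ⟨hx, hy, hxy, -⟩ := h
    simp [hxy, hx, hy]

lemma IsBasisOfType.timeTwo (h : IsBasisOfType E β bt x y) :
    ![β 1 1 (x (1 + 1)), β 1 1 (y (1 + 1))] =
      bt.timeTwo (TensorProduct.mk ℂ (E 1) (E 1)) (x 1) (y 1) := by
  have hodd : ¬ Even ((1 : ℕ+) : ℕ) := by simp
  cases bt with
  | e1 a => rw [h.2.2.2.2.2.1 1 1, h.2.2.2.2.2.2 1 1]; rfl
  | e2 a => rw [h.2.2.2.2.2.2.1 1 1 hodd, h.2.2.2.2.2.2.2.2 1 1 hodd]; rfl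
  | e3 l => rw [h.2.2.2.2.1 1 1, h.2.2.2.2.2 1 1, PNat.one_coe, pow_one]; rfl
  | e4 | e5 => rw [h.2.2.2.1 1 1, h.2.2.2.2 1 1]; rfl

lemma IsBasisOfType.exists_map_range_eq_pencil (hdim : ∀ t, Module.finrank ℂ (E t) = 2)
    (h : IsBasisOfType E β bt x y) :
    ∃ b : OrthonormalBasis (Fin 2) ℂ (E 1),
      (LinearMap.range (β 1 1).toLinearMap).map (tensorMatrix b.toBasis) = bt.pencil := by
  obtain ⟨hx, hy, hxy⟩ := h.timeOne
  obtain ⟨b, hbx, hby⟩ := exists_orthonormalBasis_equivFun (hdim 1) hx hy hxy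
    h.admissible.overlap_sq_lt_one
  refine ⟨b, ?_⟩
  have hspan : Submodule.span ℂ (Set.range ![x (1 + 1), y (1 + 1)]) = ⊤ :=
    (linearIndependent_pair_of_norm_inner_lt (h.norm_inner_lt _)).span_eq_top_of_card_eq_finrank
      (by simp [hdim])
  have himage : (β 1 1).toLinearMap ∘ ![x (1 + 1), y (1 + 1)] =
      ![β 1 1 (x (1 + 1)), β 1 1 (y (1 + 1))] := by
    ext1 i; fin_cases i <;> rfl
  rw [LinearMap.range_eq_map, ← hspan, Submodule.map_span, ← Set.range_comp, himage, h.timeTwo,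
    Submodule.map_span, ← Set.range_comp, ← BType.timeTwo_compr₂, mk_compr₂_tensorMatrix,
    BType.timeTwo_compl₁₂]
  simp only [LinearEquiv.coe_coe, hbx, hby]
  rfl

end Bases

section Isomorphism

variable {E F : ℕ+ → Type*}
  [∀ t, NormedAddCommGroup (E t)] [∀ t, InnerProductSpace ℂ (E t)]
  [∀ t, NormedAddCommGroup (F t)] [∀ t, InnerProductSpace ℂ (F t)]
  {β : ∀ s t : ℕ+, E (s + t) →ₗᵢ[ℂ] (E s ⊗[ℂ] E t)}
  {γ : ∀ s t : ℕ+, F (s + t) →ₗᵢ[ℂ] (F s ⊗[ℂ] F t)}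
  {θ : ∀ t : ℕ+, E t ≃ₗᵢ[ℂ] F t}

lemma Intertwines.range_eq_map_range (hθ : Intertwines E F β γ θ) (s t : ℕ+) :
    LinearMap.range (γ s t).toLinearMap =
      (LinearMap.range (β s t).toLinearMap).map
        (TensorProduct.map (θ s).toLinearEquiv.toLinearMap (θ t).toLinearEquiv.toLinearMap) := by
  rw [← LinearMap.range_comp, ← LinearMap.range_comp_of_range_eq_top _
    (LinearEquiv.range (θ (s + t)).toLinearEquiv)]
  congr 1
  ext w
  exact hθ s t w

lemma Intertwines.map_tensorMatrix_range (hθ : Intertwines E F β γ θ)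
    (bE : Module.Basis (Fin 2) ℂ (E 1)) (bF : Module.Basis (Fin 2) ℂ (F 1)) :
    (LinearMap.range (γ 1 1).toLinearMap).map (tensorMatrix bF) =
      ((LinearMap.range (β 1 1).toLinearMap).map (tensorMatrix bE)).map
        (congruence (LinearMap.toMatrix bE bF (θ 1).toLinearEquiv.toLinearMap)) := by
  rw [hθ.range_eq_map_range, ← Submodule.map_comp, ← Submodule.map_comp]
  congr 1
  exact LinearMap.ext (tensorMatrix_map _ bE bF)

end Isomorphism

theorem statement1_general
    (E : ℕ+ → Type*) [∀ t, NormedAddCommGroup (E t)] [∀ t, InnerProductSpace ℂ (E t)]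
    (hdim : ∀ t, Module.finrank ℂ (E t) = 2)
    (β : ∀ s t : ℕ+, E (s + t) →ₗᵢ[ℂ] (E s ⊗[ℂ] E t))
    (F : ℕ+ → Type*) [∀ t, NormedAddCommGroup (F t)] [∀ t, InnerProductSpace ℂ (F t)]
    (hdimF : ∀ t, Module.finrank ℂ (F t) = 2)
    (γ : ∀ s t : ℕ+, F (s + t) →ₗᵢ[ℂ] (F s ⊗[ℂ] F t))
    (x y : ∀ t : ℕ+, E t) (u v : ∀ t : ℕ+, F t) (bt bt' : BType)
    (hxy : IsBasisOfType E β bt x y) (huv : IsBasisOfType F γ bt' u v)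
    (θ : ∀ t : ℕ+, E t ≃ₗᵢ[ℂ] F t) (hθ : Intertwines E F β γ θ) :
    bt = bt' := by
  obtain ⟨bE, hbE⟩ := hxy.exists_map_range_eq_pencil hdim
  obtain ⟨bF, hbF⟩ := huv.exists_map_range_eq_pencil hdimF
  refine BType.eq_of_map_pencil hxy.admissible huv.admissible
    ((θ 1).toMatrix_mem_unitaryGroup bE bF) ?_
  rw [← hbE, ← hbF, hθ.map_tensorMatrix_range]

/-- **Lemma 1.4.** Isomorphic subproduct systems have bases of the same type, with
the same parameter. -/
theorem statement1
    (E : ℕ+ → Type*) [∀ t, NormedAddCommGroup (E t)] [∀ t, InnerProductSpace ℂ (E t)]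
    (hdim : ∀ t, Module.finrank ℂ (E t) = 2)
    (β : ∀ s t : ℕ+, E (s + t) →ₗᵢ[ℂ] (E s ⊗[ℂ] E t))
    (hassoc : SubprodAssoc E β)
    (F : ℕ+ → Type*) [∀ t, NormedAddCommGroup (F t)] [∀ t, InnerProductSpace ℂ (F t)]
    (hdimF : ∀ t, Module.finrank ℂ (F t) = 2)
    (γ : ∀ s t : ℕ+, F (s + t) →ₗᵢ[ℂ] (F s ⊗[ℂ] F t))
    (hassocF : SubprodAssoc F γ)
    (x y : ∀ t : ℕ+, E t) (u v : ∀ t : ℕ+, F t) (bt bt' : BType)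
    (hxy : IsBasisOfType E β bt x y) (huv : IsBasisOfType F γ bt' u v)
    (θ : ∀ t : ℕ+, E t ≃ₗᵢ[ℂ] F t) (hθ : Intertwines E F β γ θ) :
    bt = bt' :=
  statement1_general E hdim β F hdimF γ x y u v bt bt' hxy huv θ hθ

end SubprodHilbert
end
end

section
/- Let (E_t, β_{s,t}) and (F_t, γ_{s,t}) be subproduct systems of two-dimensional Hilbert spaces possessing bases of the same type with the same parameter (both of type E_1(a), or both of type E_2(a), or both of type E_3(λ), or both of type E_4, or both of type E_5). Then (E_t,β) and (F_t,γ) are isomorphic; indeed there is an isomorphism (θ_t)_t carrying the chosen basis of (E_t,β) to the chosen basis of (F_t,γ). -/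
noncomputable section

open scoped TensorProduct ComplexConjugate

namespace SubprodHilbert

section TensorConstruction


variable {E F : Type*} [NormedAddCommGroup E] [InnerProductSpace ℂ E]
  [NormedAddCommGroup F] [InnerProductSpace ℂ F]

local notation "⟪" x ", " y "⟫" => @inner ℂ _ _ x y

end TensorConstruction


/-!
A basis of any of the five types prescribes the Gram matrix of `(x t, y t)`, and in each case
that Gram matrix is nonsingular (strict Cauchy–Schwarz), so `(x t, y t)` is a basis of the
two-dimensional space `E t`. Two bases with the same Gram matrix are related by a unique unitary
`θ t`. Since `β` and `γ` act on the two bases by the same formulas, `γ ∘ θ (s + t)` and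
`(θ s ⊗ θ t) ∘ β` agree on a basis of `E (s + t)`, hence everywhere.
-/

lemma norm_ofReal_pow_lt_one {a : ℝ} (ha₀ : 0 ≤ a) (ha₁ : a < 1) (t : ℕ+) :
    ‖(a : ℂ) ^ (t : ℕ)‖ < 1 := by
  rw [norm_pow, Complex.norm_real, Real.norm_of_nonneg ha₀]
  exact pow_lt_one₀ ha₀ ha₁ t.ne_zero

section PairOfVectors

variable {E F : Type*} [NormedAddCommGroup E] [InnerProductSpace ℂ E]
  [NormedAddCommGroup F] [InnerProductSpace ℂ F]

lemma linearIndependent_pair_of_norm_inner_lt_s2 {x y : E}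
    (h : ‖(inner ℂ x y : ℂ)‖ < ‖x‖ * ‖y‖) : LinearIndependent ℂ ![x, y] := by
  have hx : x ≠ 0 := by rintro rfl; simp at h
  refine (LinearIndependent.pair_iff' hx).2 fun a hax => h.ne ?_
  rw [← hax, inner_smul_right, norm_mul, norm_smul, inner_self_eq_norm_sq_to_K]
  simp [sq]
  ring

lemma _root_.Module.Basis.exists_linearIsometryEquiv_of_inner_eq {ι : Type*} [Fintype ι]
    (b : Module.Basis ι ℂ E) (c : Module.Basis ι ℂ F)
    (h : ∀ i j, (inner ℂ (b i) (b j) : ℂ) = inner ℂ (c i) (c j)) :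
    ∃ θ : E ≃ₗᵢ[ℂ] F, ∀ i, θ (b i) = c i := by
  let θ : E ≃ₗ[ℂ] F := b.equiv c (Equiv.refl ι)
  have hθ : ∀ i, θ (b i) = c i := fun i => b.equiv_apply i c _
  have hinner : ((innerₛₗ ℂ).comp θ.toLinearMap).compl₂ θ.toLinearMap = innerₛₗ ℂ :=
    LinearMap.ext_basis b b fun i j => by simp [hθ, h]
  exact ⟨θ.isometryOfInner fun v w => LinearMap.congr_fun₂ hinner v w, hθ⟩

end PairOfVectors

section Intertwining

variable {E F : ℕ+ → Type*}
  [∀ t, NormedAddCommGroup (E t)] [∀ t, InnerProductSpace ℂ (E t)]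
  [∀ t, NormedAddCommGroup (F t)] [∀ t, InnerProductSpace ℂ (F t)]
  {β : ∀ s t : ℕ+, E (s + t) →ₗᵢ[ℂ] (E s ⊗[ℂ] E t)}
  {γ : ∀ s t : ℕ+, F (s + t) →ₗᵢ[ℂ] (F s ⊗[ℂ] F t)}

lemma intertwines_of_basis {ι : Type*} (b : ∀ t, Module.Basis ι ℂ (E t))
    (θ : ∀ t, E t ≃ₗᵢ[ℂ] F t)
    (h : ∀ s t i, γ s t (θ (s + t) (b (s + t) i)) =
      TensorProduct.map (θ s).toLinearEquiv.toLinearMap (θ t).toLinearEquiv.toLinearMap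
        (β s t (b (s + t) i))) :
    Intertwines E F β γ θ := fun s t =>
  LinearMap.congr_fun <| (b (s + t)).ext
    (f₁ := (γ s t).toLinearMap ∘ₗ (θ (s + t)).toLinearEquiv.toLinearMap)
    (f₂ := TensorProduct.map (θ s).toLinearEquiv.toLinearMap (θ t).toLinearEquiv.toLinearMap ∘ₗ
      (β s t).toLinearMap) (h s t)

theorem exists_intertwines_of_pair (hdim : ∀ t, Module.finrank ℂ (E t) = 2)
    (hdimF : ∀ t, Module.finrank ℂ (F t) = 2) {x y : ∀ t, E t} {u v : ∀ t, F t}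
    (hcs : ∀ t, ‖(inner ℂ (x t) (y t) : ℂ)‖ < ‖x t‖ * ‖y t‖)
    (hx : ∀ t, ‖x t‖ = ‖u t‖) (hy : ∀ t, ‖y t‖ = ‖v t‖)
    (hinner : ∀ t, (inner ℂ (x t) (y t) : ℂ) = inner ℂ (u t) (v t))
    (hrel : ∀ θ : ∀ t, E t ≃ₗᵢ[ℂ] F t, (∀ t, θ t (x t) = u t) → (∀ t, θ t (y t) = v t) →
      ∀ s t, ∀ w ∈ ({x (s + t), y (s + t)} : Set (E (s + t))), γ s t (θ (s + t) w) =
        TensorProduct.map (θ s).toLinearEquiv.toLinearMap (θ t).toLinearEquiv.toLinearMap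
          (β s t w)) :
    ∃ θ : ∀ t : ℕ+, E t ≃ₗᵢ[ℂ] F t, Intertwines E F β γ θ ∧
      ∀ t : ℕ+, θ t (x t) = u t ∧ θ t (y t) = v t := by
  let b : ∀ t, Module.Basis (Fin 2) ℂ (E t) := fun t =>
    basisOfLinearIndependentOfCardEqFinrank (linearIndependent_pair_of_norm_inner_lt_s2 (hcs t))
      (by simp [hdim])
  let c : ∀ t, Module.Basis (Fin 2) ℂ (F t) := fun t =>
    basisOfLinearIndependentOfCardEqFinrank
      (linearIndependent_pair_of_norm_inner_lt_s2 (by rw [← hinner, ← hx, ← hy]; exact hcs t))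
      (by simp [hdimF])
  have hgram : ∀ t i j, (inner ℂ (b t i) (b t j) : ℂ) = inner ℂ (c t i) (c t j) := by
    intro t i j
    fin_cases i <;> fin_cases j <;>
      simp [b, c, inner_self_eq_norm_sq_to_K, hx, hy, hinner, ← inner_conj_symm (y t)]
  choose θ hθ using fun t => (b t).exists_linearIsometryEquiv_of_inner_eq (c t) (hgram t)
  have hθx : ∀ t, θ t (x t) = u t := fun t => by simpa [b, c] using hθ t 0
  have hθy : ∀ t, θ t (y t) = v t := fun t => by simpa [b, c] using hθ t 1
  refine ⟨θ, intertwines_of_basis b θ fun s t i => ?_, fun t => ⟨hθx t, hθy t⟩⟩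
  exact hrel θ hθx hθy s t _ (by fin_cases i <;> simp [b])

variable {x y : ∀ t, E t} {u v : ∀ t, F t}

theorem IsBasisE1.exists_intertwines (hdim : ∀ t, Module.finrank ℂ (E t) = 2)
    (hdimF : ∀ t, Module.finrank ℂ (F t) = 2) {a : ℝ} (ha₀ : 0 ≤ a) (ha₁ : a < 1)
    (hE : IsBasisE1 E β a x y) (hF : IsBasisE1 F γ a u v) :
    ∃ θ : ∀ t : ℕ+, E t ≃ₗᵢ[ℂ] F t, Intertwines E F β γ θ ∧
      ∀ t : ℕ+, θ t (x t) = u t ∧ θ t (y t) = v t := by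
  obtain ⟨hx, hy, hxy, hβx, hβy⟩ := hE
  obtain ⟨hu, hv, huv, hγu, hγv⟩ := hF
  refine exists_intertwines_of_pair hdim hdimF
    (fun t => by simpa [hx, hy, hxy] using norm_ofReal_pow_lt_one ha₀ ha₁ t)
    (by simp [hx, hu]) (by simp [hy, hv]) (by simp [hxy, huv]) ?_
  rintro θ hθx hθy s t w (rfl | rfl) <;> simp [hθx, hθy, hβx, hβy, hγu, hγv]

theorem IsBasisE2.exists_intertwines (hdim : ∀ t, Module.finrank ℂ (E t) = 2)
    (hdimF : ∀ t, Module.finrank ℂ (F t) = 2) {a : ℝ} (ha₀ : 0 ≤ a) (ha₁ : a < 1)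
    (hE : IsBasisE2 E β a x y) (hF : IsBasisE2 F γ a u v) :
    ∃ θ : ∀ t : ℕ+, E t ≃ₗᵢ[ℂ] F t, Intertwines E F β γ θ ∧
      ∀ t : ℕ+, θ t (x t) = u t ∧ θ t (y t) = v t := by
  obtain ⟨hx, hy, hxy, hβx_even, hβx_odd, hβy_even, hβy_odd⟩ := hE
  obtain ⟨hu, hv, huv, hγu_even, hγu_odd, hγv_even, hγv_odd⟩ := hF
  refine exists_intertwines_of_pair hdim hdimF
    (fun t => by simpa [hx, hy, hxy] using norm_ofReal_pow_lt_one ha₀ ha₁ t)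
    (by simp [hx, hu]) (by simp [hy, hv]) (by simp [hxy, huv]) ?_
  rintro θ hθx hθy s t w (rfl | rfl) <;> by_cases hs : Even (s : ℕ) <;>
    simp [hs, hθx, hθy, hβx_even, hβx_odd, hβy_even, hβy_odd, hγu_even, hγu_odd, hγv_even,
      hγv_odd]

lemma one_le_sum_range_pow {r : ℝ} (hr : 0 ≤ r) {n : ℕ} (hn : n ≠ 0) :
    1 ≤ ∑ k ∈ Finset.range n, r ^ k := by
  simpa using Finset.single_le_sum (fun k _ => pow_nonneg hr k)
    (Finset.mem_range.2 (Nat.pos_of_ne_zero hn))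

theorem IsBasisE3.exists_intertwines (hdim : ∀ t, Module.finrank ℂ (E t) = 2)
    (hdimF : ∀ t, Module.finrank ℂ (F t) = 2) {l : ℂ}
    (hE : IsBasisE3 E β l x y) (hF : IsBasisE3 F γ l u v) :
    ∃ θ : ∀ t : ℕ+, E t ≃ₗᵢ[ℂ] F t, Intertwines E F β γ θ ∧
      ∀ t : ℕ+, θ t (x t) = u t ∧ θ t (y t) = v t := by
  obtain ⟨hx, hy, hxy, hβx, hβy⟩ := hE
  obtain ⟨hu, hv, huv, hγu, hγv⟩ := hF
  have hy_pos : ∀ t, 0 < ‖y t‖ := fun t => by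
    have := one_le_sum_range_pow (sq_nonneg ‖l‖) t.ne_zero
    simp only [← pow_mul] at this
    nlinarith [hy t, norm_nonneg (y t)]
  refine exists_intertwines_of_pair hdim hdimF (fun t => by simpa [hx, hxy] using hy_pos t)
    (by simp [hx, hu])
    (fun t => (pow_left_inj₀ (norm_nonneg _) (norm_nonneg _) two_ne_zero).1 (by rw [hy, hv]))
    (by simp [hxy, huv]) ?_
  rintro θ hθx hθy s t w (rfl | rfl) <;> simp [hθx, hθy, hβx, hβy, hγu, hγv]

theorem IsBasisE4.exists_intertwines (hdim : ∀ t, Module.finrank ℂ (E t) = 2)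
    (hdimF : ∀ t, Module.finrank ℂ (F t) = 2)
    (hE : IsBasisE4 E β x y) (hF : IsBasisE4 F γ u v) :
    ∃ θ : ∀ t : ℕ+, E t ≃ₗᵢ[ℂ] F t, Intertwines E F β γ θ ∧
      ∀ t : ℕ+, θ t (x t) = u t ∧ θ t (y t) = v t := by
  obtain ⟨hx, hy, hxy, hβx, hβy⟩ := hE
  obtain ⟨hu, hv, huv, hγu, hγv⟩ := hF
  refine exists_intertwines_of_pair hdim hdimF (by simp [hx, hy, hxy])
    (by simp [hx, hu]) (by simp [hy, hv]) (by simp [hxy, huv]) ?_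
  rintro θ hθx hθy s t w (rfl | rfl) <;> simp [hθx, hθy, hβx, hβy, hγu, hγv]

theorem IsBasisE5.exists_intertwines (hdim : ∀ t, Module.finrank ℂ (E t) = 2)
    (hdimF : ∀ t, Module.finrank ℂ (F t) = 2)
    (hE : IsBasisE5 E β x y) (hF : IsBasisE5 F γ u v) :
    ∃ θ : ∀ t : ℕ+, E t ≃ₗᵢ[ℂ] F t, Intertwines E F β γ θ ∧
      ∀ t : ℕ+, θ t (x t) = u t ∧ θ t (y t) = v t := by
  obtain ⟨hx, hy, hxy, hβx, hβy⟩ := hE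
  obtain ⟨hu, hv, huv, hγu, hγv⟩ := hF
  refine exists_intertwines_of_pair hdim hdimF (by simp [hx, hy, hxy])
    (by simp [hx, hu]) (by simp [hy, hv]) (by simp [hxy, huv]) ?_
  rintro θ hθx hθy s t w (rfl | rfl) <;> simp [hθx, hθy, hβx, hβy, hγu, hγv]

end Intertwining

theorem statement2_general
    (E : ℕ+ → Type*) [∀ t, NormedAddCommGroup (E t)] [∀ t, InnerProductSpace ℂ (E t)]
    (hdim : ∀ t, Module.finrank ℂ (E t) = 2)
    (β : ∀ s t : ℕ+, E (s + t) →ₗᵢ[ℂ] (E s ⊗[ℂ] E t))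
    (F : ℕ+ → Type*) [∀ t, NormedAddCommGroup (F t)] [∀ t, InnerProductSpace ℂ (F t)]
    (hdimF : ∀ t, Module.finrank ℂ (F t) = 2)
    (γ : ∀ s t : ℕ+, F (s + t) →ₗᵢ[ℂ] (F s ⊗[ℂ] F t))
    (x y : ∀ t : ℕ+, E t) (u v : ∀ t : ℕ+, F t) (bt : BType)
    (hxy : IsBasisOfType E β bt x y) (huv : IsBasisOfType F γ bt u v) :
    ∃ θ : ∀ t : ℕ+, E t ≃ₗᵢ[ℂ] F t, Intertwines E F β γ θ ∧
      ∀ t : ℕ+, θ t (x t) = u t ∧ θ t (y t) = v t := by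
  cases bt with
  | e1 a => exact hxy.2.2.exists_intertwines hdim hdimF hxy.1 hxy.2.1 huv.2.2
  | e2 a => exact hxy.2.2.exists_intertwines hdim hdimF hxy.1 hxy.2.1 huv.2.2
  | e3 l => exact hxy.2.exists_intertwines hdim hdimF huv.2
  | e4 => exact hxy.exists_intertwines hdim hdimF huv
  | e5 => exact hxy.exists_intertwines hdim hdimF huv

/-- Two subproduct systems possessing bases of the same type (with the same parameter) are
isomorphic, by an isomorphism carrying the one basis to the other. -/
theorem statement2
    (E : ℕ+ → Type*) [∀ t, NormedAddCommGroup (E t)] [∀ t, InnerProductSpace ℂ (E t)]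
    (hdim : ∀ t, Module.finrank ℂ (E t) = 2)
    (β : ∀ s t : ℕ+, E (s + t) →ₗᵢ[ℂ] (E s ⊗[ℂ] E t))
    (hassoc : SubprodAssoc E β)
    (F : ℕ+ → Type*) [∀ t, NormedAddCommGroup (F t)] [∀ t, InnerProductSpace ℂ (F t)]
    (hdimF : ∀ t, Module.finrank ℂ (F t) = 2)
    (γ : ∀ s t : ℕ+, F (s + t) →ₗᵢ[ℂ] (F s ⊗[ℂ] F t))
    (hassocF : SubprodAssoc F γ)
    (x y : ∀ t : ℕ+, E t) (u v : ∀ t : ℕ+, F t) (bt : BType)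
    (hxy : IsBasisOfType E β bt x y) (huv : IsBasisOfType F γ bt u v) :
    ∃ θ : ∀ t : ℕ+, E t ≃ₗᵢ[ℂ] F t, Intertwines E F β γ θ ∧
      ∀ t : ℕ+, θ t (x t) = u t ∧ θ t (y t) = v t :=
  statement2_general E hdim β F hdimF γ x y u v bt hxy huv

end SubprodHilbert
end
end

section
/- Let (E_t, β_{s,t}) be a subproduct system of two-dimensional Hilbert spaces with a basis (x_t,y_t)_t of type E_1(0) (i.e. with ⟨x_t,y_t⟩ = 0 for all t). Then every automorphism (θ_t)_t of (E_t,β) has one of the following two forms: there exist c,d ∈ ℝ such that θ_t x_t = e^{ict} x_t and θ_t y_t = e^{idt} y_t for all t, or there exist c,d ∈ ℝ such that θ_t x_t = e^{ict} y_t and θ_t y_t = e^{idt} x_t for all t. -/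
noncomputable section

open scoped TensorProduct ComplexConjugate

namespace SubprodHilbert

section TensorConstruction


variable {E F : Type*} [NormedAddCommGroup E] [InnerProductSpace ℂ E]
  [NormedAddCommGroup F] [InnerProductSpace ℂ F]

local notation "⟪" x ", " y "⟫" => @inner ℂ _ _ x y

end TensorConstruction


/-! An automorphism maps the multiplicative families `x`, `y` to multiplicative families of unit
vectors. Inner products of two multiplicative families are multiplicative in `t`, because each
`β s t` is isometric; hence a multiplicative family `u` of an `𝓔₁(0)` system has coordinates
`a ^ t`, `b ^ t` along `x t`, `y t`. Parseval at `t = 1` and `t = 2` gives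
`|a|² + |b|² = |a|⁴ + |b|⁴ = 1`, so `ab = 0`, and `u` is `e^{ict} x` or `e^{ict} y`. Since `θ x ⊥ θ y`,
the images of `x` and `y` cannot both be of the same kind. -/

local notation "⟪" x ", " y "⟫" => @inner ℂ _ _ x y

section Pair

variable {G : Type*} [NormedAddCommGroup G] [InnerProductSpace ℂ G] {x y : G}

def orthonormalBasisOfPair (hxy : Orthonormal ℂ ![x, y])
    (hdim : Module.finrank ℂ G = 2) : OrthonormalBasis (Fin 2) ℂ G :=
  (basisOfOrthonormalOfCardEqFinrank hxy (by simp [hdim])).toOrthonormalBasis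
    (by rwa [coe_basisOfOrthonormalOfCardEqFinrank])

lemma coe_orthonormalBasisOfPair (hxy : Orthonormal ℂ ![x, y])
    (hdim : Module.finrank ℂ G = 2) :
    ⇑(orthonormalBasisOfPair hxy hdim) = ![x, y] := by
  rw [orthonormalBasisOfPair, Module.Basis.coe_toOrthonormalBasis,
    coe_basisOfOrthonormalOfCardEqFinrank]

lemma eq_inner_smul_add_inner_smul_of_orthonormal_pair
    (hxy : Orthonormal ℂ ![x, y]) (hdim : Module.finrank ℂ G = 2) (v : G) :
    v = ⟪x, v⟫ • x + ⟪y, v⟫ • y := by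
  simpa [coe_orthonormalBasisOfPair hxy hdim, Fin.sum_univ_two] using
    ((orthonormalBasisOfPair hxy hdim).sum_repr' v).symm

lemma norm_inner_sq_add_norm_inner_sq_of_orthonormal_pair
    (hxy : Orthonormal ℂ ![x, y]) (hdim : Module.finrank ℂ G = 2) (v : G) :
    ‖⟪x, v⟫‖ ^ 2 + ‖⟪y, v⟫‖ ^ 2 = ‖v‖ ^ 2 := by
  simpa [coe_orthonormalBasisOfPair hxy hdim, Fin.sum_univ_two] using
    (orthonormalBasisOfPair hxy hdim).sum_sq_norm_inner_right v

end Pair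

lemma pow_eq_exp_arg_mul_of_norm_eq_one {z : ℂ} (hz : ‖z‖ = 1) (n : ℕ) :
    z ^ n = Complex.exp (Complex.I * (z.arg : ℂ) * (n : ℂ)) := by
  conv_lhs => rw [← Complex.norm_mul_exp_arg_mul_I z, hz, Complex.ofReal_one, one_mul,
    ← Complex.exp_nat_mul]
  ring_nf

lemma PNat.eq_pow_of_map_add {M : Type*} [Monoid M] (f : ℕ+ → M)
    (hf : ∀ s t, f (s + t) = f s * f t) (t : ℕ+) : f t = f 1 ^ (t : ℕ) := by
  induction t using PNat.recOn with
  | one => simp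
  | succ t ih => rw [hf, ih, PNat.add_coe, PNat.one_coe, pow_succ]

lemma inner_smul_smul_self_ne_zero {G : Type*} [NormedAddCommGroup G] [InnerProductSpace ℂ G]
    {a b : ℂ} (ha : a ≠ 0) (hb : b ≠ 0) {w : G} (hw : w ≠ 0) : ⟪a • w, b • w⟫ ≠ 0 := by
  simp [ha, hb, hw]

section Multiplicative

variable {E : ℕ+ → Type*} [∀ t, NormedAddCommGroup (E t)] [∀ t, InnerProductSpace ℂ (E t)]

def IsMultiplicative (β : ∀ s t : ℕ+, E (s + t) →ₗᵢ[ℂ] (E s ⊗[ℂ] E t))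
    (u : ∀ t : ℕ+, E t) : Prop :=
  ∀ s t : ℕ+, β s t (u (s + t)) = u s ⊗ₜ[ℂ] u t

variable {β : ∀ s t : ℕ+, E (s + t) →ₗᵢ[ℂ] (E s ⊗[ℂ] E t)} {u v : ∀ t : ℕ+, E t}

lemma IsMultiplicative.inner_add (hu : IsMultiplicative β u) (hv : IsMultiplicative β v)
    (s t : ℕ+) : ⟪v (s + t), u (s + t)⟫ = ⟪v s, u s⟫ * ⟪v t, u t⟫ := by
  rw [← (β s t).inner_map_map, hu, hv]
  exact inner_tmul _ _ _ _

lemma IsMultiplicative.inner_eq_pow (hu : IsMultiplicative β u) (hv : IsMultiplicative β v)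
    (t : ℕ+) : ⟪v t, u t⟫ = ⟪v 1, u 1⟫ ^ (t : ℕ) :=
  PNat.eq_pow_of_map_add (fun t => ⟪v t, u t⟫) (hu.inner_add hv) t

lemma IsMultiplicative.map {θ : ∀ t : ℕ+, E t ≃ₗᵢ[ℂ] E t} (hθ : Intertwines E E β β θ)
    (hu : IsMultiplicative β u) : IsMultiplicative β (fun t => θ t (u t)) := by
  intro s t
  rw [hθ, hu, TensorProduct.map_tmul]
  rfl

variable {x y : ∀ t : ℕ+, E t}

lemma IsBasisE1.inner_eq_zero (hxy : IsBasisE1 E β 0 x y) (t : ℕ+) : ⟪x t, y t⟫ = 0 := by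
  rw [hxy.2.2.1, Complex.ofReal_zero, zero_pow t.ne_zero]

lemma IsBasisE1.orthonormal (hxy : IsBasisE1 E β 0 x y) (t : ℕ+) :
    Orthonormal ℂ ![x t, y t] := by
  have hyx : ⟪y t, x t⟫ = 0 := by rw [← inner_conj_symm, hxy.inner_eq_zero, map_zero]
  rw [orthonormal_iff_ite]
  intro i j
  fin_cases i <;> fin_cases j <;>
    simp [hxy.1, hxy.2.1, hxy.inner_eq_zero, hyx, inner_self_eq_norm_sq_to_K]

lemma IsMultiplicative.eq_exp_smul_or_eq_exp_smul (hdim : ∀ t, Module.finrank ℂ (E t) = 2)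
    (hxy : IsBasisE1 E β 0 x y) (hu : IsMultiplicative β u) (hnorm : ∀ t, ‖u t‖ = 1) :
    (∃ c : ℝ, ∀ t : ℕ+, u t = Complex.exp (Complex.I * (c : ℂ) * ((t : ℕ) : ℂ)) • x t) ∨
    (∃ c : ℝ, ∀ t : ℕ+, u t = Complex.exp (Complex.I * (c : ℂ) * ((t : ℕ) : ℂ)) • y t) := by
  set a := ⟪x 1, u 1⟫
  set b := ⟪y 1, u 1⟫
  have ha : ∀ t, ⟪x t, u t⟫ = a ^ (t : ℕ) := hu.inner_eq_pow hxy.2.2.2.1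
  have hb : ∀ t, ⟪y t, u t⟫ = b ^ (t : ℕ) := hu.inner_eq_pow hxy.2.2.2.2
  have hexp : ∀ t, u t = a ^ (t : ℕ) • x t + b ^ (t : ℕ) • y t := fun t => by
    rw [← ha, ← hb]
    exact eq_inner_smul_add_inner_smul_of_orthonormal_pair (hxy.orthonormal t) (hdim t) _
  have hparseval : ∀ t : ℕ+, (‖a‖ ^ (t : ℕ)) ^ 2 + (‖b‖ ^ (t : ℕ)) ^ 2 = 1 := fun t => by
    have h := norm_inner_sq_add_norm_inner_sq_of_orthonormal_pair (hxy.orthonormal t) (hdim t) (u t)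
    rwa [ha, hb, hnorm, norm_pow, norm_pow, one_pow] at h
  have h1 : ‖a‖ ^ 2 + ‖b‖ ^ 2 = 1 := by simpa using hparseval 1
  have h2 : (‖a‖ ^ 2) ^ 2 + (‖b‖ ^ 2) ^ 2 = 1 := by simpa using hparseval 2
  have hab : ‖a‖ * ‖b‖ = 0 := pow_eq_zero_iff two_ne_zero |>.mp (by nlinarith)
  rcases mul_eq_zero.mp hab with ha0 | hb0
  · have hb1 : ‖b‖ = 1 := (pow_eq_one_iff_of_nonneg (norm_nonneg b) two_ne_zero).mp <| by
      rwa [ha0, zero_pow two_ne_zero, zero_add] at h1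
    refine Or.inr ⟨b.arg, fun t => ?_⟩
    rw [hexp t, norm_eq_zero.mp ha0, zero_pow t.ne_zero, zero_smul, zero_add,
      pow_eq_exp_arg_mul_of_norm_eq_one hb1]
  · have ha1 : ‖a‖ = 1 := (pow_eq_one_iff_of_nonneg (norm_nonneg a) two_ne_zero).mp <| by
      rwa [hb0, zero_pow two_ne_zero, add_zero] at h1
    refine Or.inl ⟨a.arg, fun t => ?_⟩
    rw [hexp t, norm_eq_zero.mp hb0, zero_pow t.ne_zero, zero_smul, add_zero,
      pow_eq_exp_arg_mul_of_norm_eq_one ha1]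

end Multiplicative

theorem statement4_general
    (E : ℕ+ → Type*) [∀ t, NormedAddCommGroup (E t)] [∀ t, InnerProductSpace ℂ (E t)]
    (hdim : ∀ t, Module.finrank ℂ (E t) = 2)
    (β : ∀ s t : ℕ+, E (s + t) →ₗᵢ[ℂ] (E s ⊗[ℂ] E t))
    (x y : ∀ t : ℕ+, E t) (hxy : IsBasisE1 E β 0 x y)
    (θ : ∀ t : ℕ+, E t ≃ₗᵢ[ℂ] E t) (hθ : Intertwines E E β β θ) :
    (∃ c d : ℝ, ∀ t : ℕ+,
        θ t (x t) = Complex.exp (Complex.I * (c : ℂ) * ((t : ℕ) : ℂ)) • x t ∧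
        θ t (y t) = Complex.exp (Complex.I * (d : ℂ) * ((t : ℕ) : ℂ)) • y t) ∨
    (∃ c d : ℝ, ∀ t : ℕ+,
        θ t (x t) = Complex.exp (Complex.I * (c : ℂ) * ((t : ℕ) : ℂ)) • y t ∧
        θ t (y t) = Complex.exp (Complex.I * (d : ℂ) * ((t : ℕ) : ℂ)) • x t) := by
  have hxm : IsMultiplicative β x := hxy.2.2.2.1
  have hym : IsMultiplicative β y := hxy.2.2.2.2
  have horth : ⟪θ 1 (x 1), θ 1 (y 1)⟫ = 0 := by
    rw [LinearIsometryEquiv.inner_map_map, hxy.inner_eq_zero]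
  have hx0 : x 1 ≠ 0 := norm_ne_zero_iff.mp (by simp [hxy.1])
  have hy0 : y 1 ≠ 0 := norm_ne_zero_iff.mp (by simp [hxy.2.1])
  have hθx := (hxm.map hθ).eq_exp_smul_or_eq_exp_smul hdim hxy
    (fun t => ((θ t).norm_map _).trans (hxy.1 t))
  have hθy := (hym.map hθ).eq_exp_smul_or_eq_exp_smul hdim hxy
    (fun t => ((θ t).norm_map _).trans (hxy.2.1 t))
  rcases hθx with ⟨c, hc⟩ | ⟨c, hc⟩ <;> rcases hθy with ⟨d, hd⟩ | ⟨d, hd⟩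
  · rw [hc, hd] at horth
    exact absurd horth (inner_smul_smul_self_ne_zero (Complex.exp_ne_zero _)
      (Complex.exp_ne_zero _) hx0)
  · exact Or.inl ⟨c, d, fun t => ⟨hc t, hd t⟩⟩
  · exact Or.inr ⟨c, d, fun t => ⟨hc t, hd t⟩⟩
  · rw [hc, hd] at horth
    exact absurd horth (inner_smul_smul_self_ne_zero (Complex.exp_ne_zero _)
      (Complex.exp_ne_zero _) hy0)

/-- **Lemma 1.11, case `𝓔₁(0)`.** -/
theorem statement4
    (E : ℕ+ → Type*) [∀ t, NormedAddCommGroup (E t)] [∀ t, InnerProductSpace ℂ (E t)]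
    (hdim : ∀ t, Module.finrank ℂ (E t) = 2)
    (β : ∀ s t : ℕ+, E (s + t) →ₗᵢ[ℂ] (E s ⊗[ℂ] E t))
    (hassoc : SubprodAssoc E β)
    (x y : ∀ t : ℕ+, E t) (hxy : IsBasisE1 E β 0 x y)
    (θ : ∀ t : ℕ+, E t ≃ₗᵢ[ℂ] E t) (hθ : Intertwines E E β β θ) :
    (∃ c d : ℝ, ∀ t : ℕ+,
        θ t (x t) = Complex.exp (Complex.I * (c : ℂ) * ((t : ℕ) : ℂ)) • x t ∧
        θ t (y t) = Complex.exp (Complex.I * (d : ℂ) * ((t : ℕ) : ℂ)) • y t) ∨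
    (∃ c d : ℝ, ∀ t : ℕ+,
        θ t (x t) = Complex.exp (Complex.I * (c : ℂ) * ((t : ℕ) : ℂ)) • y t ∧
        θ t (y t) = Complex.exp (Complex.I * (d : ℂ) * ((t : ℕ) : ℂ)) • x t) :=
  statement4_general E hdim β x y hxy θ hθ

end SubprodHilbert
end
end

section
/- Let (E_t, β_{s,t}) be a subproduct system of two-dimensional Hilbert spaces with a basis (x_t,y_t)_t of type E_2(a), a ∈ [0,1), and let m ∈ {1,2,...}. Then the family (x_{mt}, y_{mt})_{t∈{1,2,...}} is a basis of the restricted subproduct system (E_{mt}, β_{ms,mt})_{s,t}, of type E_1(a^m) if m is even, and of type E_2(a^m) if m is odd. -/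
noncomputable section

open scoped TensorProduct ComplexConjugate

namespace SubprodHilbert

section TensorConstruction


variable {E F : Type*} [NormedAddCommGroup E] [InnerProductSpace ℂ E]
  [NormedAddCommGroup F] [InnerProductSpace ℂ F]

local notation "⟪" x ", " y "⟫" => @inner ℂ _ _ x y

end TensorConstruction


lemma castE_apply_pi {ι : Type*} (E : ι → Type*) [∀ t, NormedAddCommGroup (E t)]
    [∀ t, InnerProductSpace ℂ (E t)] (z : ∀ t, E t) {a b : ι} (h : a = b) :
    castE E h (z a) = z b := by
  subst h; rfl

lemma restrictβ_apply {E : ℕ+ → Type*} [∀ t, NormedAddCommGroup (E t)]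
    [∀ t, InnerProductSpace ℂ (E t)] (β : ∀ s t : ℕ+, E (s + t) →ₗᵢ[ℂ] (E s ⊗[ℂ] E t))
    (m s t : ℕ+) (z : ∀ t, E t) :
    restrictβ E β m s t (z (m * (s + t))) = β (m * s) (m * t) (z (m * s + m * t)) :=
  congrArg (β (m * s) (m * t)) (castE_apply_pi E z (mul_add m s t))

lemma _root_.PNat.even_mul_iff_of_odd {m : ℕ+} (hm : Odd (m : ℕ)) (s : ℕ+) :
    Even ((m * s : ℕ+) : ℕ) ↔ Even (s : ℕ) := by
  rw [PNat.mul_coe, Nat.even_mul]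
  simp [Nat.not_even_iff_odd.mpr hm]

namespace IsBasisE2

variable {E : ℕ+ → Type*} [∀ t, NormedAddCommGroup (E t)] [∀ t, InnerProductSpace ℂ (E t)]
  {β : ∀ s t : ℕ+, E (s + t) →ₗᵢ[ℂ] (E s ⊗[ℂ] E t)} {a : ℝ} {x y : ∀ t : ℕ+, E t}

lemma inner_mul (hxy : IsBasisE2 E β a x y) (m t : ℕ+) :
    (inner ℂ (x (m * t)) (y (m * t)) : ℂ) = ((a ^ (m : ℕ) : ℝ) : ℂ) ^ (t : ℕ) := by
  rw [hxy.2.2.1, PNat.mul_coe]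
  push_cast
  rw [pow_mul]

lemma restrict_of_even (hxy : IsBasisE2 E β a x y) {m : ℕ+} (hm : Even (m : ℕ)) :
    IsBasisE1 (fun t => E (m * t)) (restrictβ E β m) (a ^ (m : ℕ))
      (fun t => x (m * t)) (fun t => y (m * t)) := by
  have hin := hxy.inner_mul m
  obtain ⟨hx, hy, -, hxe, -, hye, -⟩ := hxy
  have hms : ∀ s : ℕ+, Even ((m * s : ℕ+) : ℕ) := fun s => by
    rw [PNat.mul_coe]; exact hm.mul_right _
  refine ⟨fun t => hx _, fun t => hy _, hin, fun s t => ?_, fun s t => ?_⟩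
  · rw [restrictβ_apply, hxe _ _ (hms s)]
  · rw [restrictβ_apply, hye _ _ (hms s)]

lemma restrict_of_odd (hxy : IsBasisE2 E β a x y) {m : ℕ+} (hm : Odd (m : ℕ)) :
    IsBasisE2 (fun t => E (m * t)) (restrictβ E β m) (a ^ (m : ℕ))
      (fun t => x (m * t)) (fun t => y (m * t)) := by
  have hin := hxy.inner_mul m
  obtain ⟨hx, hy, -, hxe, hxo, hye, hyo⟩ := hxy
  have hpar := PNat.even_mul_iff_of_odd hm
  refine ⟨fun t => hx _, fun t => hy _, hin, fun s t hs => ?_, fun s t hs => ?_,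
    fun s t hs => ?_, fun s t hs => ?_⟩
  · rw [restrictβ_apply, hxe _ _ ((hpar s).mpr hs)]
  · rw [restrictβ_apply, hxo _ _ (mt (hpar s).mp hs)]
  · rw [restrictβ_apply, hye _ _ ((hpar s).mpr hs)]
  · rw [restrictβ_apply, hyo _ _ (mt (hpar s).mp hs)]

end IsBasisE2

theorem statement9_general
    (E : ℕ+ → Type*) [∀ t, NormedAddCommGroup (E t)] [∀ t, InnerProductSpace ℂ (E t)]
    (β : ∀ s t : ℕ+, E (s + t) →ₗᵢ[ℂ] (E s ⊗[ℂ] E t))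
    (a : ℝ)
    (x y : ∀ t : ℕ+, E t) (hxy : IsBasisE2 E β a x y) (m : ℕ+) :
    (Even (m : ℕ) →
      IsBasisE1 (fun t => E (m * t)) (restrictβ E β m) (a ^ (m : ℕ))
        (fun t => x (m * t)) (fun t => y (m * t))) ∧
    (¬ Even (m : ℕ) →
      IsBasisE2 (fun t => E (m * t)) (restrictβ E β m) (a ^ (m : ℕ))
        (fun t => x (m * t)) (fun t => y (m * t))) :=
  ⟨hxy.restrict_of_even, fun hm => hxy.restrict_of_odd (Nat.not_even_iff_odd.mp hm)⟩

/-- **(2.1), case `𝓔₂(a)`.** Restricting a basis of type `𝓔₂(a)` to the multiples of `m`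
yields a basis of type `𝓔₁(aᵐ)` (`m` even) resp. `𝓔₂(aᵐ)` (`m` odd) of the restricted
subproduct system. -/
theorem statement9
    (E : ℕ+ → Type*) [∀ t, NormedAddCommGroup (E t)] [∀ t, InnerProductSpace ℂ (E t)]
    (hdim : ∀ t, Module.finrank ℂ (E t) = 2)
    (β : ∀ s t : ℕ+, E (s + t) →ₗᵢ[ℂ] (E s ⊗[ℂ] E t))
    (hassoc : SubprodAssoc E β)
    (a : ℝ) (ha0 : 0 ≤ a) (ha1 : a < 1)
    (x y : ∀ t : ℕ+, E t) (hxy : IsBasisE2 E β a x y) (m : ℕ+) :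
    (Even (m : ℕ) →
      IsBasisE1 (fun t => E (m * t)) (restrictβ E β m) (a ^ (m : ℕ))
        (fun t => x (m * t)) (fun t => y (m * t))) ∧
    (¬ Even (m : ℕ) →
      IsBasisE2 (fun t => E (m * t)) (restrictβ E β m) (a ^ (m : ℕ))
        (fun t => x (m * t)) (fun t => y (m * t))) :=
  statement9_general E β a x y hxy m

end SubprodHilbert
end
end

section
/- Let (E_t, β_{s,t}) be a subproduct system of two-dimensional Hilbert spaces with a basis (x_t,y_t)_t of type E_3(λ), λ ∈ ℂ∖{0}, and let m ∈ {1,2,...}. Then the family (x_{mt}, y_{mt}/‖y_m‖)_{t∈{1,2,...}} is a basis of type E_3(λ^m) of the restricted subproduct system (E_{mt}, β_{ms,mt})_{s,t}. -/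
noncomputable section

open scoped TensorProduct ComplexConjugate

namespace SubprodHilbert

section TensorConstruction


variable {E F : Type*} [NormedAddCommGroup E] [InnerProductSpace ℂ E]
  [NormedAddCommGroup F] [InnerProductSpace ℂ F]

local notation "⟪" x ", " y "⟫" => @inner ℂ _ _ x y

end TensorConstruction


lemma castE_apply_section {ι : Type*} (E : ι → Type*) [∀ t, NormedAddCommGroup (E t)]
    [∀ t, InnerProductSpace ℂ (E t)] (x : ∀ t, E t) {a b : ι} (h : a = b) :
    castE E h (x a) = x b := by
  subst h; rfl

lemma restrictβ_apply_section (E : ℕ+ → Type*) [∀ t, NormedAddCommGroup (E t)]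
    [∀ t, InnerProductSpace ℂ (E t)] (β : ∀ s t : ℕ+, E (s + t) →ₗᵢ[ℂ] (E s ⊗[ℂ] E t))
    (m s t : ℕ+) (x : ∀ t, E t) :
    restrictβ E β m s t (x (m * (s + t))) = β (m * s) (m * t) (x (m * s + m * t)) := by
  simp only [restrictβ, LinearIsometry.coe_comp, Function.comp_apply,
    LinearIsometryEquiv.coe_toLinearIsometry, castE_apply_section]

lemma geom_sum_range_mul {R : Type*} [CommSemiring R] (a : R) (m t : ℕ) :
    ∑ k ∈ Finset.range (m * t), a ^ k
      = (∑ k ∈ Finset.range m, a ^ k) * ∑ j ∈ Finset.range t, (a ^ m) ^ j := by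
  induction t with
  | zero => simp
  | succ t ih =>
    rw [Nat.mul_succ, Finset.sum_range_add, ih, Finset.sum_range_succ, mul_add]
    congr 1
    rw [Finset.sum_mul]
    exact Finset.sum_congr rfl fun k _ => by rw [pow_add, pow_mul, mul_comm]

namespace IsBasisE3

variable {E : ℕ+ → Type*} [∀ t, NormedAddCommGroup (E t)] [∀ t, InnerProductSpace ℂ (E t)]
  {β : ∀ s t : ℕ+, E (s + t) →ₗᵢ[ℂ] (E s ⊗[ℂ] E t)} {l : ℂ} {x y : ∀ t : ℕ+, E t}

lemma one_le_norm_sq (h : IsBasisE3 E β l x y) (t : ℕ+) : 1 ≤ ‖y t‖ ^ 2 := by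
  rw [h.2.1 t]
  calc 1 = ‖l‖ ^ (2 * 0) := by simp
    _ ≤ _ := Finset.single_le_sum (f := fun k => ‖l‖ ^ (2 * k)) (fun k _ => by positivity)
      (Finset.mem_range.2 t.pos)

lemma norm_sq_mul (h : IsBasisE3 E β l x y) (m t : ℕ+) :
    ‖y (m * t)‖ ^ 2 = ‖y m‖ ^ 2 * ∑ k ∈ Finset.range t, ‖l ^ (m : ℕ)‖ ^ (2 * k) := by
  simp only [h.2.1, PNat.mul_coe, pow_mul, norm_pow, geom_sum_range_mul]
  simp only [← pow_mul, mul_comm]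

end IsBasisE3

theorem statement10_general
    (E : ℕ+ → Type*) [∀ t, NormedAddCommGroup (E t)] [∀ t, InnerProductSpace ℂ (E t)]
    (β : ∀ s t : ℕ+, E (s + t) →ₗᵢ[ℂ] (E s ⊗[ℂ] E t))
    (l : ℂ)
    (x y : ∀ t : ℕ+, E t) (hxy : IsBasisE3 E β l x y) (m : ℕ+) :
    IsBasisE3 (fun t => E (m * t)) (restrictβ E β m) (l ^ (m : ℕ))
      (fun t => x (m * t)) (fun t => (‖y m‖ : ℂ)⁻¹ • y (m * t)) := by
  have hym : ‖y m‖ ^ 2 ≠ 0 := (one_pos.trans_le (hxy.one_le_norm_sq m)).ne'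
  have hnorm := hxy.norm_sq_mul m
  obtain ⟨hx, -, horth, hβx, hβy⟩ := hxy
  refine ⟨fun t => hx _, fun t => ?_, fun t => ?_, fun s t => ?_, fun s t => ?_⟩
  · rw [norm_smul, mul_pow, hnorm, norm_inv, Complex.norm_real, norm_norm, inv_pow,
      inv_mul_cancel_left₀ hym]
  · simp only [inner_smul_right, horth, mul_zero]
  · rw [restrictβ_apply_section, hβx]
  · rw [map_smul, restrictβ_apply_section, hβy, ← pow_mul, ← PNat.mul_coe, smul_add,
      TensorProduct.smul_tmul', TensorProduct.tmul_smul, smul_comm]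

/-- **(2.1), case `𝓔₃(λ)`.** Restricting a basis of type `𝓔₃(λ)` to the multiples of `m`
(and renormalizing `y`) yields a basis of type `𝓔₃(λᵐ)` of the restricted subproduct
system. -/
theorem statement10
    (E : ℕ+ → Type*) [∀ t, NormedAddCommGroup (E t)] [∀ t, InnerProductSpace ℂ (E t)]
    (hdim : ∀ t, Module.finrank ℂ (E t) = 2)
    (β : ∀ s t : ℕ+, E (s + t) →ₗᵢ[ℂ] (E s ⊗[ℂ] E t))
    (hassoc : SubprodAssoc E β)
    (l : ℂ) (hl : l ≠ 0)
    (x y : ∀ t : ℕ+, E t) (hxy : IsBasisE3 E β l x y) (m : ℕ+) :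
    IsBasisE3 (fun t => E (m * t)) (restrictβ E β m) (l ^ (m : ℕ))
      (fun t => x (m * t)) (fun t => (‖y m‖ : ℂ)⁻¹ • y (m * t)) :=
  statement10_general E β l x y hxy m

end SubprodHilbert
end
end
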